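/- arXiv:2312.17127 — 7 statements merged into one kernel-verified Lean document; each statement's English description precedes it below -/
import Mathlib

section
/- In a countable graph R with the extension property, for any finite sets A, B of vertices and any graph isomorphism f : A → B between the induced subgraphs, f extends to an automorphism of R. -/
/-!
Back-and-forth. Call a set of pairs `(v, w)` a partial isomorphism if it is the graph of an
adjacency-preserving and -reflecting bijection between its two projections. By the extension
property of the target, any vertex `v` can be added to the domain: choose `w` adjacent to the
images of the neighbours of `v` and to none of the images of its non-neighbours; symmetrically
for the range. Enumerating the countably many vertices on both sides, the Rasiowa–Sikorski lemma
gives a directed family of finite partial isomorphisms, containing the graph of `f`, whose union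
is defined everywhere on both sides; that union is the required isomorphism.
-/

/-- A graph has the extension property if for all disjoint finite vertex sets `A`, `B`
there is a vertex outside `A ∪ B` adjacent to everything in `A` and nothing in `B`. -/
def HasExtensionProperty {V : Type*} (G : SimpleGraph V) : Prop :=
  ∀ A B : Finset V, Disjoint A B →
    ∃ v, v ∉ A ∧ v ∉ B ∧ (∀ a ∈ A, G.Adj v a) ∧ ∀ b ∈ B, ¬ G.Adj v b

namespace SimpleGraph

variable {V W : Type*} {G : SimpleGraph V} {H : SimpleGraph W}

def IsPartialIso (G : SimpleGraph V) (H : SimpleGraph W) (R : Set (V × W)) : Prop :=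
  ∀ p ∈ R, ∀ q ∈ R, (p.1 = q.1 ↔ p.2 = q.2) ∧ (G.Adj p.1 q.1 ↔ H.Adj p.2 q.2)

namespace IsPartialIso

variable {R : Set (V × W)}

lemma swap (hR : IsPartialIso G H R) : IsPartialIso H G (Prod.swap ⁻¹' R) := fun _ hp _ hq =>
  ⟨(hR _ hp _ hq).1.symm, (hR _ hp _ hq).2.symm⟩

lemma insert_of_forall (hR : IsPartialIso G H R) {x : V × W}
    (hx : ∀ q ∈ R, (x.1 = q.1 ↔ x.2 = q.2) ∧ (G.Adj x.1 q.1 ↔ H.Adj x.2 q.2)) :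
    IsPartialIso G H (insert x R) := by
  rintro _ (rfl | hp) _ (rfl | hq)
  · simp
  · exact hx _ hq
  · obtain ⟨h₁, h₂⟩ := hx _ hp
    exact ⟨eq_comm.trans (h₁.trans eq_comm),
      (G.adj_comm _ _).trans (h₂.trans (H.adj_comm _ _))⟩
  · exact hR _ hp _ hq

lemma exists_insert_left (hH : HasExtensionProperty H) (hR : IsPartialIso G H R)
    (hfin : R.Finite) (v : V) : ∃ w, IsPartialIso G H (insert (v, w) R) := by
  classical
  by_cases hv : ∃ w, (v, w) ∈ R
  · obtain ⟨w, hw⟩ := hv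
    exact ⟨w, by rwa [Set.insert_eq_of_mem hw]⟩
  push Not at hv
  set s := hfin.toFinset
  set A := (s.filter (G.Adj v ·.1)).image Prod.snd
  set B := (s.filter (¬ G.Adj v ·.1)).image Prod.snd
  have hdisj : Disjoint A B := by
    simp only [A, B, Finset.disjoint_left, Finset.mem_image, Finset.mem_filter]
    rintro _ ⟨a, ⟨ha, hva⟩, rfl⟩ ⟨b, ⟨hb, hvb⟩, hab⟩
    rw [(hR a (by simpa [s] using ha) b (by simpa [s] using hb)).1.2 hab.symm] at hva
    exact hvb hva
  obtain ⟨w, -, hwB, hadj, hnadj⟩ := hH _ _ hdisj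
  refine ⟨w, hR.insert_of_forall fun q hq => ?_⟩
  have hvq : v ≠ q.1 := fun h => hv q.2 (by rwa [h])
  have hqs : q ∈ s := by simpa [s] using hq
  by_cases hadjq : G.Adj v q.1
  · have hwq := hadj q.2 (Finset.mem_image.2 ⟨q, Finset.mem_filter.2 ⟨hqs, hadjq⟩, rfl⟩)
    exact ⟨iff_of_false hvq hwq.ne, iff_of_true hadjq hwq⟩
  · have hq₂ : q.2 ∈ B := Finset.mem_image.2 ⟨q, Finset.mem_filter.2 ⟨hqs, hadjq⟩, rfl⟩
    exact ⟨iff_of_false hvq fun h => hwB (by rwa [show w = q.2 from h]),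
      iff_of_false hadjq (hnadj _ hq₂)⟩

lemma exists_insert_right (hG : HasExtensionProperty G) (hR : IsPartialIso G H R)
    (hfin : R.Finite) (w : W) : ∃ v, IsPartialIso G H (insert (v, w) R) := by
  obtain ⟨v, hv⟩ := hR.swap.exists_insert_left hG (hfin.preimage Prod.swap_injective.injOn) w
  refine ⟨v, ?_⟩
  convert hv.swap using 1
  ext ⟨a, b⟩
  simp [and_comm]

lemma exists_iso (hR : IsPartialIso G H R) (hdom : ∀ v, ∃ w, (v, w) ∈ R)
    (hcod : ∀ w, ∃ v, (v, w) ∈ R) : ∃ σ : G ≃g H, ∀ v, (v, σ v) ∈ R := by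
  choose σ hσ using hdom
  have hinj : σ.Injective := fun u v h => (hR _ (hσ u) _ (hσ v)).1.2 h
  have hsurj : σ.Surjective := fun w => by
    obtain ⟨v, hv⟩ := hcod w
    exact ⟨v, (hR _ (hσ v) _ hv).1.1 rfl⟩
  exact ⟨⟨Equiv.ofBijective σ ⟨hinj, hsurj⟩,
    fun {u v} => (hR _ (hσ u) _ (hσ v)).2.symm⟩, hσ⟩

end IsPartialIso

lemma isPartialIso_sUnion_of_directedOn {S : Set (Set (V × W))} (hS : DirectedOn (· ⊆ ·) S)
    (h : ∀ R ∈ S, IsPartialIso G H R) : IsPartialIso G H (⋃₀ S) := by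
  rintro p ⟨R₁, hR₁, hp⟩ q ⟨R₂, hR₂, hq⟩
  obtain ⟨R, hR, h₁, h₂⟩ := hS R₁ hR₁ R₂ hR₂
  exact h R hR p (h₁ hp) q (h₂ hq)

lemma isPartialIso_range_of_embedding {s : Set V} (f : G.induce s ↪g H) :
    IsPartialIso G H (Set.range fun a : s => ((a : V), f a)) := by
  rintro _ ⟨a, rfl⟩ _ ⟨b, rfl⟩
  exact ⟨Subtype.ext_iff.symm.trans f.injective.eq_iff.symm, f.map_adj_iff.symm⟩

abbrev FinPartialIso (G : SimpleGraph V) (H : SimpleGraph W) : Type _ :=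
  {R : Set (V × W) // R.Finite ∧ IsPartialIso G H R}

namespace FinPartialIso

def definedAtLeft (hH : HasExtensionProperty H) (v : V) : Order.Cofinal (FinPartialIso G H) where
  carrier := {R | ∃ w, (v, w) ∈ R.1}
  isCofinal R := by
    obtain ⟨w, hw⟩ := R.2.2.exists_insert_left hH R.2.1 v
    exact ⟨⟨_, R.2.1.insert _, hw⟩, ⟨w, Set.mem_insert _ _⟩, Set.subset_insert _ _⟩

def definedAtRight (hG : HasExtensionProperty G) (w : W) : Order.Cofinal (FinPartialIso G H) where
  carrier := {R | ∃ v, (v, w) ∈ R.1}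
  isCofinal R := by
    obtain ⟨v, hv⟩ := R.2.2.exists_insert_right hG R.2.1 w
    exact ⟨⟨_, R.2.1.insert _, hv⟩, ⟨v, Set.mem_insert _ _⟩, Set.subset_insert _ _⟩

end FinPartialIso

theorem exists_iso_extending_of_hasExtensionProperty [Countable V] [Countable W]
    (hG : HasExtensionProperty G) (hH : HasExtensionProperty H) (R₀ : FinPartialIso G H) :
    ∃ σ : G ≃g H, ∀ p ∈ R₀.1, σ p.1 = p.2 := by
  have := Encodable.ofCountable V
  have := Encodable.ofCountable W
  let D := Sum.elim (FinPartialIso.definedAtLeft hH) (FinPartialIso.definedAtRight hG)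
  let I := Order.idealOfCofinals R₀ D
  let U := ⋃₀ (Subtype.val '' (I : Set (FinPartialIso G H)))
  have hU : IsPartialIso G H U := isPartialIso_sUnion_of_directedOn
    (directedOn_image.2 I.directed) (by rintro _ ⟨R, -, rfl⟩; exact R.2.2)
  have hsub : ∀ R ∈ I, R.1 ⊆ U := fun R hR => Set.subset_sUnion_of_mem ⟨R, hR, rfl⟩
  have hdom (v : V) : ∃ w, (v, w) ∈ U := by
    obtain ⟨R, ⟨w, hw⟩, hR⟩ := Order.cofinal_meets_idealOfCofinals R₀ D (.inl v)
    exact ⟨w, hsub R hR hw⟩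
  have hcod (w : W) : ∃ v, (v, w) ∈ U := by
    obtain ⟨R, ⟨v, hv⟩, hR⟩ := Order.cofinal_meets_idealOfCofinals R₀ D (.inr w)
    exact ⟨v, hsub R hR hv⟩
  obtain ⟨σ, hσ⟩ := hU.exists_iso hdom hcod
  exact ⟨σ, fun p hp =>
    (hU _ (hσ p.1) _ (hsub _ (Order.mem_idealOfCofinals R₀ D) hp)).1.1 rfl⟩

end SimpleGraph

theorem stmt8_general {V : Type} [Countable V] (G : SimpleGraph V)
    (hG : HasExtensionProperty G)
    (A B : Set V) (hA : A.Finite)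
    (f : G.induce A ≃g G.induce B) :
    ∃ σ : G ≃g G, ∀ a : A, σ a = (f a : V) := by
  have := hA.to_subtype
  obtain ⟨σ, hσ⟩ := SimpleGraph.exists_iso_extending_of_hasExtensionProperty hG hG
    ⟨_, Set.finite_range _, SimpleGraph.isPartialIso_range_of_embedding
      ((SimpleGraph.Embedding.induce B).comp f.toEmbedding)⟩
  exact ⟨σ, fun a => hσ _ ⟨a, rfl⟩⟩

/-- In a countable graph with the extension property, any isomorphism between finite
induced subgraphs extends to an automorphism of the whole graph. -/
theorem stmt8 {V : Type} [Countable V] [Infinite V] (G : SimpleGraph V)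
    (hG : HasExtensionProperty G)
    (A B : Set V) (hA : A.Finite) (hB : B.Finite)
    (f : G.induce A ≃g G.induce B) :
    ∃ σ : G ≃g G, ∀ a : A, σ a = (f a : V) :=
  stmt8_general G hG A B hA f
end

section
/- Let G be a group acting on a set X, and for each x ∈ X say a finite set A of 'atoms' supports x if every group element fixing A pointwise (under a fixed action on atoms) also fixes x. In the category of nominal sets over the Rado graph automorphism group (Rado-nominal sets): if finite sets A and B both support an element x, then A ∩ B supports x. -/
/-- `A` supports `x` under the action `act` of the automorphism group of `G`:
every automorphism fixing `A` pointwise fixes `x`. -/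
def SupportsElt {V X : Type} (G : SimpleGraph V) (act : (G ≃g G) → X → X)
    (A : Finset V) (x : X) : Prop :=
  ∀ σ : G ≃g G, (∀ a ∈ A, σ a = a) → act σ x = x

open FirstOrder Language Structure

namespace SimpleGraph

variable {V : Type*} (G : SimpleGraph V)

def IsEmbeddingOn (g : V → V) (s : Set V) : Prop :=
  Set.InjOn g s ∧ ∀ u ∈ s, ∀ v ∈ s, G.Adj (g u) (g v) ↔ G.Adj u v

structure IsFreshCopy (d : V → V) (T S : Finset V) (q : V → V → Prop) : Prop where
  isEmbeddingOn : G.IsEmbeddingOn d T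
  notMem : ∀ t ∈ T, d t ∉ S
  adj_iff : ∀ t ∈ T, ∀ w ∈ S, G.Adj (d t) w ↔ q t w

variable {G}

lemma Iso.isEmbeddingOn (σ : G ≃g G) (s : Set V) : G.IsEmbeddingOn σ s :=
  ⟨σ.injective.injOn, fun _ _ _ _ => σ.map_rel_iff⟩

lemma isEmbeddingOn_id (s : Set V) : G.IsEmbeddingOn id s :=
  Iso.isEmbeddingOn (RelIso.refl G.Adj) s

lemma IsEmbeddingOn.mono {g : V → V} {s t : Set V} (hg : G.IsEmbeddingOn g t) (hst : s ⊆ t) :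
    G.IsEmbeddingOn g s :=
  ⟨hg.1.mono hst, fun u hu v hv => hg.2 u (hst hu) v (hst hv)⟩

lemma IsEmbeddingOn.piecewise [DecidableEq V] {g h : V → V} {s : Finset V} {t : Set V}
    (hg : G.IsEmbeddingOn g s) (hh : G.IsEmbeddingOn h t)
    (hgh : ∀ u ∈ s, ∀ v ∈ t, v ∉ s → g u ≠ h v ∧ (G.Adj (g u) (h v) ↔ G.Adj u v)) :
    G.IsEmbeddingOn (s.piecewise g h) (s ∪ t) := by
  have key : ∀ u ∈ (s : Set V) ∪ t, ∀ v ∈ (s : Set V) ∪ t, u ∈ s → v ∉ s →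
      s.piecewise g h u ≠ s.piecewise g h v ∧
        (G.Adj (s.piecewise g h u) (s.piecewise g h v) ↔ G.Adj u v) := by
    intro u _ v hv hu hvs
    rw [Finset.piecewise_eq_of_mem _ _ _ hu, Finset.piecewise_eq_of_notMem _ _ _ hvs]
    exact hgh u hu v (hv.resolve_left hvs) hvs
  refine ⟨fun u hu v hv huv => ?_, fun u hu v hv => ?_⟩
  · by_cases hus : u ∈ s <;> by_cases hvs : v ∈ s
    · simp only [Finset.piecewise_eq_of_mem _ _ _, hus, hvs] at huv
      exact hg.1 hus hvs huv
    · exact absurd huv (key u hu v hv hus hvs).1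
    · exact absurd huv.symm (key v hv u hu hvs hus).1
    · simp only [Finset.piecewise_eq_of_notMem _ _ _, hus, hvs, not_false_eq_true] at huv
      exact hh.1 (hu.resolve_left hus) (hv.resolve_left hvs) huv
  · by_cases hus : u ∈ s <;> by_cases hvs : v ∈ s
    · simp only [Finset.piecewise_eq_of_mem _ _ _, hus, hvs]
      exact hg.2 u hus v hvs
    · exact (key u hu v hv hus hvs).2
    · rw [G.adj_comm, G.adj_comm u]
      exact (key v hv u hu hvs hus).2
    · simp only [Finset.piecewise_eq_of_notMem _ _ _, hus, hvs, not_false_eq_true]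
      exact hh.2 u (hu.resolve_left hus) v (hv.resolve_left hvs)

end SimpleGraph

lemma FirstOrder.Language.graph.relMap_comp_iff_of_adj {M N : Type*}
    [Language.graph.Structure M] [Language.graph.Structure N] {φ : M → N}
    (h : ∀ a b, RelMap adj ![φ a, φ b] ↔ RelMap adj ![a, b])
    {n : ℕ} (r : Language.graph.Relations n) (x : Fin n → M) :
    RelMap r (φ ∘ x) ↔ RelMap r x := by
  cases r
  have hx : x = ![x 0, x 1] := by ext i; fin_cases i <;> rfl
  rw [hx]
  convert h (x 0) (x 1) using 2
  ext i; fin_cases i <;> rfl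

lemma FirstOrder.Language.Substructure.eq_or_mem_of_mem_closure_singleton_sup {L : Language}
    [L.IsRelational] {M : Type*} [L.Structure M] {S : L.Substructure M} {m x : M}
    (hx : x ∈ closure L {m} ⊔ S) : x = m ∨ x ∈ S := by
  rw [← S.closure_eq, ← closure_insert, mem_closure_iff_of_isRelational] at hx
  exact hx

namespace HasExtensionProperty

open SimpleGraph

variable {V : Type*} {G : SimpleGraph V}

lemma exists_notMem_adj_iff (hG : HasExtensionProperty G) (s : Finset V) (P : V → Prop) :
    ∃ v ∉ s, ∀ u ∈ s, G.Adj v u ↔ P u := by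
  classical
  obtain ⟨v, hvP, hvnP, hP, hnP⟩ := hG {u ∈ s | P u} {u ∈ s | ¬ P u}
    (Finset.disjoint_filter_filter_not s s P)
  refine ⟨v, fun hv => ?_, fun u hu => ⟨fun h => ?_, fun h => hP u (by simp [hu, h])⟩⟩
  · by_cases h : P v
    · exact hvP (by simp [hv, h])
    · exact hvnP (by simp [hv, h])
  · by_contra h'
    exact hnP u (by simp [hu, h']) h

lemma exists_isFreshCopy [DecidableEq V] (hG : HasExtensionProperty G) (T S : Finset V)
    (q : V → V → Prop) : ∃ d, G.IsFreshCopy d T S q := by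
  induction T using Finset.induction_on with
  | empty => exact ⟨id, by simp [IsEmbeddingOn], by simp, by simp⟩
  | @insert t₀ T ht₀ ih =>
    obtain ⟨d, hd⟩ := ih
    obtain ⟨v, hv, hv_adj⟩ := hG.exists_notMem_adj_iff (S ∪ T.image d)
      fun w => (w ∈ S ∧ q t₀ w) ∨ ∃ t ∈ T, d t = w ∧ G.Adj t₀ t
    have hvS : v ∉ S := fun h => hv (Finset.mem_union_left _ h)
    have hv_ne : ∀ t ∈ T, v ≠ d t := fun t ht h =>
      hv (Finset.mem_union_right _ (h ▸ Finset.mem_image_of_mem d ht))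
    have hv_adj_S : ∀ w ∈ S, G.Adj v w ↔ q t₀ w := fun w hw =>
      (hv_adj w (Finset.mem_union_left _ hw)).trans
        ⟨fun h => h.elim And.right fun ⟨t, ht, hdt, _⟩ => absurd (hdt ▸ hw) (hd.notMem t ht),
          fun h => Or.inl ⟨hw, h⟩⟩
    have hv_adj_T : ∀ t ∈ T, G.Adj v (d t) ↔ G.Adj t₀ t := fun t ht =>
      (hv_adj _ (Finset.mem_union_right _ (Finset.mem_image_of_mem d ht))).trans
        ⟨fun h => h.elim (fun h => absurd h.1 (hd.notMem t ht))
          fun ⟨t', ht', hdt', h⟩ => hd.isEmbeddingOn.1 ht' ht hdt' ▸ h,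
          fun h => Or.inr ⟨t, ht, rfl, h⟩⟩
    have hsingle : G.IsEmbeddingOn (fun _ => v) ({t₀} : Finset V) := by
      simp [IsEmbeddingOn]
    refine ⟨({t₀} : Finset V).piecewise (fun _ => v) d, ?_, ?_, ?_⟩
    · rw [Finset.insert_eq, Finset.coe_union]
      refine hsingle.piecewise hd.isEmbeddingOn fun u hu t ht htu => ?_
      rw [Finset.mem_singleton.1 hu]
      exact ⟨hv_ne t ht, hv_adj_T t ht⟩
    · intro t ht
      rcases Finset.mem_insert.1 ht with rfl | ht
      · simpa using hvS
      · rw [Finset.piecewise_eq_of_notMem _ _ _ (by grind)]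
        exact hd.notMem t ht
    · intro t ht w hw
      rcases Finset.mem_insert.1 ht with rfl | ht
      · simpa using hv_adj_S w hw
      · rw [Finset.piecewise_eq_of_notMem _ _ _ (by grind)]
        exact hd.adj_iff t ht w hw

theorem isExtensionPair (hG : HasExtensionProperty G) :
    let := G.structure; Language.graph.IsExtensionPair V V := by
  let := G.structure
  classical
  refine isExtensionPair_iff_exists_embedding_closure_singleton_sup.2 fun S hS f m => ?_
  by_cases hm : m ∈ S
  · refine ⟨f.comp (Substructure.inclusion ?_), rfl⟩
    exact sup_le ((Substructure.closure_le).2 (Set.singleton_subset_iff.2 hm)) le_rfl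
  have : Finite S := hS.finite
  obtain ⟨v, hv, hv_adj⟩ := hG.exists_notMem_adj_iff (Set.finite_range fun s : S => f s).toFinset
    fun u => ∃ s : S, f s = u ∧ G.Adj m s
  have hv_ne : ∀ s : S, f s ≠ v := fun s h => hv (by simp [← h])
  have hv_adj' : ∀ s : S, G.Adj v (f s) ↔ G.Adj m s := fun s =>
    (hv_adj _ (by simp)).trans ⟨fun ⟨t, hts, ht⟩ => f.injective hts ▸ ht, fun h => ⟨s, rfl, h⟩⟩
  set T := Substructure.closure Language.graph {m} ⊔ S
  have hT_eq_m : ∀ x : T, (x : V) ∉ S → (x : V) = m := fun x hx =>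
    (Substructure.eq_or_mem_of_mem_closure_singleton_sup x.2).resolve_right hx
  let g : T → V := fun x => if h : (x : V) ∈ S then f ⟨x, h⟩ else v
  have g_of_mem : ∀ (x : T) (h : (x : V) ∈ S), g x = f ⟨x, h⟩ := fun x h => dif_pos h
  have g_of_notMem : ∀ x : T, (x : V) ∉ S → g x = v := fun x h => dif_neg h
  have g_inj : Function.Injective g := by
    intro x y hxy
    by_cases hx : (x : V) ∈ S <;> by_cases hy : (y : V) ∈ S
    · rw [g_of_mem x hx, g_of_mem y hy] at hxy
      exact Subtype.ext (congrArg Subtype.val (f.injective hxy) :)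
    · exact absurd (g_of_notMem y hy ▸ g_of_mem x hx ▸ hxy) (hv_ne _)
    · exact absurd (g_of_notMem x hx ▸ g_of_mem y hy ▸ hxy.symm) (hv_ne _)
    · exact Subtype.ext ((hT_eq_m x hx).trans (hT_eq_m y hy).symm)
  have g_adj : ∀ x y : T, G.Adj (g x) (g y) ↔ G.Adj x y := by
    intro x y
    by_cases hx : (x : V) ∈ S <;> by_cases hy : (y : V) ∈ S
    · rw [g_of_mem x hx, g_of_mem y hy]
      exact f.map_rel adj ![⟨x, hx⟩, ⟨y, hy⟩]
    · rw [g_of_mem x hx, g_of_notMem y hy, hT_eq_m y hy, G.adj_comm, G.adj_comm x]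
      exact hv_adj' ⟨x, hx⟩
    · rw [g_of_notMem x hx, g_of_mem y hy, hT_eq_m x hx]
      exact hv_adj' ⟨y, hy⟩
    · rw [g_of_notMem x hx, g_of_notMem y hy, hT_eq_m x hx, hT_eq_m y hy]
      exact iff_of_false G.irrefl G.irrefl
  refine ⟨⟨⟨g, g_inj⟩, isEmptyElim, graph.relMap_comp_iff_of_adj g_adj⟩, ?_⟩
  ext s
  exact (g_of_mem (Substructure.inclusion le_sup_right s) s.2).symm

theorem exists_relIso_eqOn [Countable V] (hG : HasExtensionProperty G) {s : Finset V}
    {g : V → V} (hg : G.IsEmbeddingOn g s) : ∃ φ : G ≃g G, Set.EqOn φ g s := by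
  let := G.structure
  have homogeneous : Language.graph.IsUltrahomogeneous V :=
    (isUltrahomogeneous_iff_IsExtensionPair cg_of_countable).2 hG.isExtensionPair
  set S := Substructure.closure Language.graph (s : Set V)
  have hS : ∀ x : S, (x : V) ∈ s := fun x =>
    (Substructure.mem_closure_iff_of_isRelational _ _ _).1 x.2
  let e : S ↪[Language.graph] V :=
    ⟨⟨fun x => g x, fun x y h => Subtype.ext (hg.1 (hS x) (hS y) h)⟩, isEmptyElim,
      graph.relMap_comp_iff_of_adj fun x y : S => hg.2 x (hS x) y (hS y)⟩
  obtain ⟨ψ, hψ⟩ := homogeneous S (Substructure.fg_closure s.finite_toSet) e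
  refine ⟨⟨ψ.toEquiv, fun {a b} => ψ.map_rel adj ![a, b]⟩, fun v hv => ?_⟩
  exact (congrArg (· ⟨v, (Substructure.mem_closure_iff_of_isRelational _ _ _).2 hv⟩) hψ).symm

end HasExtensionProperty

lemma SupportsElt.act_eq_of_eqOn {V X : Type} {G : SimpleGraph V} {act : (G ≃g G) → X → X}
    (h_comp : ∀ (σ τ : G ≃g G) (x : X), act (σ.trans τ) x = act τ (act σ x))
    {A : Finset V} {x : X} (hA : SupportsElt G act A x) {φ ψ : G ≃g G} (hφ : act φ x = x)
    (hψ : Set.EqOn ψ φ A) : act ψ x = x := by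
  have hfix : act (ψ.trans φ.symm) x = x :=
    hA _ fun a ha => by simp [hψ (Finset.mem_coe.2 ha)]
  calc act ψ x = act ((ψ.trans φ.symm).trans φ) x := by congr 1; ext; simp
    _ = x := by rw [h_comp, hfix, hφ]

namespace SimpleGraph.IsFreshCopy

variable {V : Type*} {G : SimpleGraph V} [DecidableEq V] {A B : Finset V} {σ : G ≃g G}
  {d : V → V}
  (hd : G.IsFreshCopy d (A ∪ B) (A ∪ B ∪ (A ∪ B).image σ) fun t => G.Adj (B.piecewise id σ t))
include hd

lemma ne_of_mem {t w : V} (ht : t ∈ A ∪ B) (hw : w ∈ A ∪ B) : w ≠ d t ∧ σ w ≠ d t :=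
  ⟨fun h => hd.notMem t ht (h ▸ Finset.mem_union_left _ hw),
    fun h => hd.notMem t ht (h ▸ Finset.mem_union_right _ (Finset.mem_image_of_mem σ hw))⟩

lemma adj_iff_of_mem_right {t w : V} (ht : t ∈ B) (hw : w ∈ A ∪ B) :
    G.Adj w (d t) ↔ G.Adj w t := by
  have := hd.adj_iff t (Finset.mem_union_right _ ht) w (Finset.mem_union_left _ hw)
  rwa [Finset.piecewise_eq_of_mem _ _ _ ht, id, G.adj_comm, G.adj_comm t] at this

lemma adj_iff_of_notMem_right {t w : V} (ht : t ∈ A ∪ B) (htB : t ∉ B) (hw : w ∈ A ∪ B) :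
    G.Adj (σ w) (d t) ↔ G.Adj w t := by
  have := hd.adj_iff t ht (σ w) (Finset.mem_union_right _ (Finset.mem_image_of_mem σ hw))
  rwa [Finset.piecewise_eq_of_notMem _ _ _ htB, σ.map_rel_iff, G.adj_comm, G.adj_comm t] at this

lemma isEmbeddingOn_piecewise_id : G.IsEmbeddingOn (A.piecewise id d) ↑(A ∪ B) := by
  have := (isEmbeddingOn_id (A : Set V)).piecewise hd.isEmbeddingOn fun u hu v hv hvA =>
    ⟨(hd.ne_of_mem hv (Finset.mem_union_left _ hu)).1, hd.adj_iff_of_mem_right (by grind)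
      (Finset.mem_union_left _ hu)⟩
  rwa [← Finset.coe_union, Finset.union_eq_right.2 Finset.subset_union_left] at this

lemma isEmbeddingOn_inter_piecewise_id (hσ : ∀ c ∈ A ∩ B, σ c = c) :
    G.IsEmbeddingOn ((A ∩ B).piecewise id d) ↑(A ∪ B) := by
  have := (isEmbeddingOn_id ((A ∩ B : Finset V) : Set V)).piecewise hd.isEmbeddingOn
    fun u hu v hv hvC => by
      have huI : u ∈ A ∪ B := Finset.mem_union_left _ (Finset.mem_inter.1 hu).1
      refine ⟨(hd.ne_of_mem hv huI).1, ?_⟩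
      by_cases hvB : v ∈ B
      · exact hd.adj_iff_of_mem_right hvB huI
      · simpa [hσ u hu] using hd.adj_iff_of_notMem_right hv hvB huI
  rwa [← Finset.coe_union, Finset.union_eq_right.2 (Finset.inter_subset_left.trans
    Finset.subset_union_left)] at this

lemma isEmbeddingOn_sdiff_piecewise : G.IsEmbeddingOn ((A \ B).piecewise d σ) ↑(A ∪ B) := by
  have := (hd.isEmbeddingOn.mono (Finset.coe_subset.2 (Finset.sdiff_subset.trans
    Finset.subset_union_left))).piecewise (Iso.isEmbeddingOn σ _) fun u hu v hv hvE => by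
      have huI : u ∈ A ∪ B := Finset.mem_union_left _ (Finset.mem_sdiff.1 hu).1
      refine ⟨(hd.ne_of_mem huI hv).2.symm, ?_⟩
      rw [G.adj_comm, G.adj_comm u]
      exact hd.adj_iff_of_notMem_right huI (Finset.mem_sdiff.1 hu).2 hv
  rwa [← Finset.coe_union, Finset.union_eq_right.2 (Finset.sdiff_subset.trans
    Finset.subset_union_left)] at this

end SimpleGraph.IsFreshCopy

theorem stmt9_general {V : Type} [Countable V] [DecidableEq V]
    (G : SimpleGraph V) (hG : HasExtensionProperty G)
    {X : Type} (act : (G ≃g G) → X → X)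
    (h_comp : ∀ (σ τ : G ≃g G) (x : X), act (σ.trans τ) x = act τ (act σ x))
    (A B : Finset V) (x : X)
    (hA : SupportsElt G act A x) (hB : SupportsElt G act B x) :
    SupportsElt G act (A ∩ B) x := by
  intro σ hσ
  obtain ⟨d, hd⟩ := hG.exists_isFreshCopy (A ∪ B) (A ∪ B ∪ (A ∪ B).image σ)
    fun t => G.Adj (B.piecewise id σ t)
  obtain ⟨φ₁, hφ₁⟩ := hG.exists_relIso_eqOn hd.isEmbeddingOn_piecewise_id
  obtain ⟨φ₂, hφ₂⟩ := hG.exists_relIso_eqOn (hd.isEmbeddingOn_inter_piecewise_id hσ)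
  obtain ⟨φ₃, hφ₃⟩ := hG.exists_relIso_eqOn hd.isEmbeddingOn_sdiff_piecewise
  have hA' : ∀ a ∈ A, a ∈ A ∪ B := fun a => Finset.mem_union_left B
  have hB' : ∀ b ∈ B, b ∈ A ∪ B := fun b => Finset.mem_union_right A
  have h₁ : act φ₁ x = x := hA φ₁ fun a ha => by simp [hφ₁ (hA' a ha), ha]
  have h₂ : act φ₂ x = x := hB.act_eq_of_eqOn h_comp h₁ fun b hb => by
    rw [hφ₂ (hB' b hb), hφ₁ (hB' b hb)]
    by_cases hbA : b ∈ A <;> simp [hbA, Finset.mem_coe.1 hb]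
  have h₃ : act φ₃ x = x := hA.act_eq_of_eqOn h_comp h₂ fun a ha => by
    rw [hφ₃ (hA' a ha), hφ₂ (hA' a ha)]
    by_cases haB : a ∈ B
    · simp [haB, Finset.mem_coe.1 ha, hσ a (Finset.mem_inter.2 ⟨ha, haB⟩)]
    · simp [haB, Finset.mem_coe.1 ha]
  exact hB.act_eq_of_eqOn h_comp h₃ fun b hb => by
    rw [hφ₃ (hB' b hb)]
    simp [Finset.mem_coe.1 hb]

/-- In Rado-nominal sets (actions of the automorphism group of a countable graph with
the extension property, i.e. the Rado graph), if finite sets `A` and `B` both support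
an element `x`, then so does `A ∩ B`. -/
theorem stmt9 {V : Type} [Countable V] [Infinite V] [DecidableEq V]
    (G : SimpleGraph V) (hG : HasExtensionProperty G)
    {X : Type} (act : (G ≃g G) → X → X)
    (h_id : ∀ x, act (RelIso.refl G.Adj) x = x)
    (h_comp : ∀ (σ τ : G ≃g G) (x : X), act (σ.trans τ) x = act τ (act σ x))
    (A B : Finset V) (x : X)
    (hA : SupportsElt G act A x) (hB : SupportsElt G act B x) :
    SupportsElt G act (A ∩ B) x :=
  stmt9_general G hG act h_comp A B x hA hB
end

section
/- A subset S ⊆ V of the vertices of the Rado graph is supported by a finite set A ⊆ V (i.e., every automorphism fixing A pointwise maps S to itself) if and only if S is definable by a first-order formula in the language of graphs with parameters from A. -/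
open FirstOrder

namespace Stmt10Aux

open FirstOrder Language Structure

variable {V : Type} [Language.graph.Structure V]

/-- The substructure (in a relational language) with a given carrier set. -/
def relSub (s : Set V) : Language.graph.Substructure V :=
  ⟨s, fun {_} f => isEmptyElim f⟩

@[simp] lemma mem_relSub {s : Set V} {x : V} : x ∈ relSub s ↔ x ∈ s := Iff.rfl

lemma relSub_fg {s : Set V} (h : s.Finite) : (relSub s).FG := by
  rw [Substructure.fg_def]
  refine ⟨s, h, le_antisymm ((Substructure.closure_le).2 (fun x hx => hx))
    (fun x hx => Substructure.subset_closure hx)⟩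

/-- Build a partial equivalence of graph structures from raw data. -/
def mkPE (s t : Set V) (f g : V → V)
    (hf : ∀ x ∈ s, f x ∈ t) (hg : ∀ y ∈ t, g y ∈ s)
    (hgf : ∀ x ∈ s, g (f x) = x) (hfg : ∀ y ∈ t, f (g y) = y)
    (hadj : ∀ x ∈ s, ∀ y ∈ s,
      (RelMap (M := V) Language.adj ![f x, f y] ↔ RelMap (M := V) Language.adj ![x, y])) :
    Language.graph.PartialEquiv V V where
  dom := relSub s
  cod := relSub t
  toEquiv :=
    { toFun := fun x => ⟨f x, hf x x.2⟩
      invFun := fun y => ⟨g y, hg y y.2⟩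
      left_inv := fun x => Subtype.ext (hgf x x.2)
      right_inv := fun y => Subtype.ext (hfg y y.2)
      map_fun' := fun {n} F _ => isEmptyElim F
      map_rel' := fun {n} r x => by
        match n, r with
        | 2, .adj =>
          have e1 : ∀ (v : Fin 2 → V), v = ![v 0, v 1] := by
            intro v; funext i; fin_cases i <;> rfl
          show RelMap (M := V) Language.adj (fun i => f ((x i : V))) ↔
            RelMap (M := V) Language.adj (fun i => ((x i : V)))
          rw [e1 (fun i => f ((x i : V))), e1 (fun i => ((x i : V)))]
          exact hadj _ (x 0).2 _ (x 1).2 }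

@[simp] lemma mkPE_dom (s t : Set V) (f g : V → V) (hf hg hgf hfg hadj) :
    (mkPE s t f g hf hg hgf hfg hadj).dom = relSub s := rfl

@[simp] lemma mkPE_cod (s t : Set V) (f g : V → V) (hf hg hgf hfg hadj) :
    (mkPE s t f g hf hg hgf hfg hadj).cod = relSub t := rfl

@[simp] lemma mkPE_apply (s t : Set V) (f g : V → V) (hf hg hgf hfg hadj)
    (x : (mkPE s t f g hf hg hgf hfg hadj).dom) :
    ((mkPE s t f g hf hg hgf hfg hadj).toEquiv x : V) = f x := rfl


theorem isExtensionPair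
    (hsymm : ∀ x y : V, RelMap Language.adj ![x, y] → RelMap Language.adj ![y, x])
    (hirr : ∀ x : V, ¬ RelMap Language.adj ![x, x])
    (hext : ∀ A B : Finset V, Disjoint A B → ∃ v, v ∉ A ∧ v ∉ B ∧
      (∀ a ∈ A, RelMap Language.adj ![v, a]) ∧ ∀ b ∈ B, ¬ RelMap Language.adj ![v, b]) :
    Language.graph.IsExtensionPair V V := by
  classical
  intro f m
  by_cases hm : m ∈ f.1.dom
  · exact ⟨f, hm, le_rfl⟩
  set p := f.1 with hp
  haveI : Finite p.dom := f.2.finite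
  haveI : Finite p.cod := (p.dom_fg_iff_cod_fg.1 f.2).finite
  have hdfin : (p.dom : Set V).Finite := Set.toFinite _
  have hcfin : (p.cod : Set V).Finite := Set.toFinite _
  set F : V → V := fun x => if h : x ∈ p.dom then (p.toEquiv ⟨x, h⟩ : V) else x with hF
  set Finv : V → V := fun y => if h : y ∈ p.cod then (p.toEquiv.symm ⟨y, h⟩ : V) else y with hFinv
  have hFmem : ∀ x ∈ p.dom, F x ∈ p.cod := by
    intro x hx; simp only [hF, dif_pos hx]; exact (p.toEquiv ⟨x, hx⟩).2
  have hFinvmem : ∀ y ∈ p.cod, Finv y ∈ p.dom := by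
    intro y hy; simp only [hFinv, dif_pos hy]; exact (p.toEquiv.symm ⟨y, hy⟩).2
  have hFinvF : ∀ x ∈ p.dom, Finv (F x) = x := by
    intro x hx
    simp only [hF, dif_pos hx, hFinv, dif_pos (p.toEquiv ⟨x, hx⟩).2]
    exact congrArg Subtype.val (p.toEquiv.symm_apply_apply ⟨x, hx⟩)
  have hFFinv : ∀ y ∈ p.cod, F (Finv y) = y := by
    intro y hy
    simp only [hFinv, dif_pos hy, hF, dif_pos (p.toEquiv.symm ⟨y, hy⟩).2]
    exact congrArg Subtype.val (p.toEquiv.apply_symm_apply ⟨y, hy⟩)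
  have hFadj : ∀ x ∈ p.dom, ∀ y ∈ p.dom,
      (RelMap (M := V) Language.adj ![F x, F y] ↔ RelMap (M := V) Language.adj ![x, y]) := by
    intro x hx y hy
    simp only [hF, dif_pos hx, dif_pos hy]
    have e1 : (![(p.toEquiv ⟨x, hx⟩ : V), (p.toEquiv ⟨y, hy⟩ : V)] : Fin 2 → V) =
        (fun i => ((p.toEquiv.toFun ∘ ![(⟨x, hx⟩ : p.dom), ⟨y, hy⟩]) i : V)) := by
      funext i; fin_cases i <;> rfl
    have e2 : (![x, y] : Fin 2 → V) =
        (fun i => ((![(⟨x, hx⟩ : p.dom), ⟨y, hy⟩] : Fin 2 → p.dom) i : V)) := by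
      funext i; fin_cases i <;> rfl
    rw [e1, e2]
    exact p.toEquiv.map_rel' Language.adj ![(⟨x, hx⟩ : p.dom), ⟨y, hy⟩]
  -- choose the new point
  set A₀ : Finset V := (hcfin.toFinset).filter (fun y => RelMap Language.adj ![m, Finv y]) with hA₀
  set B₀ : Finset V := (hcfin.toFinset).filter (fun y => ¬ RelMap Language.adj ![m, Finv y]) with hB₀
  have hdisj : Disjoint A₀ B₀ := by
    rw [Finset.disjoint_left]
    intro a ha hb
    rw [hA₀, Finset.mem_filter] at ha
    rw [hB₀, Finset.mem_filter] at hb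
    exact hb.2 ha.2
  obtain ⟨n, hnA, hnB, hadjA, hadjB⟩ := hext A₀ B₀ hdisj
  have hncod : n ∉ p.cod := by
    intro hn
    by_cases h : RelMap (M := V) Language.adj ![m, Finv n]
    · exact hnA (by rw [hA₀, Finset.mem_filter]; exact ⟨hcfin.mem_toFinset.2 hn, h⟩)
    · exact hnB (by rw [hB₀, Finset.mem_filter]; exact ⟨hcfin.mem_toFinset.2 hn, h⟩)
  have hnadj : ∀ y ∈ p.cod,
      (RelMap (M := V) Language.adj ![n, y] ↔ RelMap (M := V) Language.adj ![m, Finv y]) := by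
    intro y hy
    constructor
    · intro h
      by_contra hc
      exact hadjB y (by rw [hB₀, Finset.mem_filter]; exact ⟨hcfin.mem_toFinset.2 hy, hc⟩) h
    · intro h
      exact hadjA y (by rw [hA₀, Finset.mem_filter]; exact ⟨hcfin.mem_toFinset.2 hy, h⟩)
  -- build the extended partial equivalence
  set s' : Set V := (p.dom : Set V) ∪ {m} with hs'
  set t' : Set V := (p.cod : Set V) ∪ {n} with ht'
  set f' : V → V := fun x => if x = m then n else F x with hf'
  set g' : V → V := fun y => if y = n then m else Finv y with hg'
  have hFn : ∀ x ∈ p.dom, F x ≠ n := fun x hx h => hncod (h ▸ hFmem x hx)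
  have hFinvm : ∀ y ∈ p.cod, Finv y ≠ m := fun y hy h => hm (h ▸ hFinvmem y hy)
  have hf'mem : ∀ x ∈ s', f' x ∈ t' := by
    rintro x (hx | hx)
    · have hxm : x ≠ m := fun h => hm (h ▸ hx)
      simp only [hf', if_neg hxm]; exact Or.inl (hFmem x hx)
    · rw [Set.mem_singleton_iff] at hx
      simp only [hf', if_pos hx]; exact Or.inr rfl
  have hg'mem : ∀ y ∈ t', g' y ∈ s' := by
    rintro y (hy | hy)
    · have hyn : y ≠ n := fun h => hncod (h ▸ hy)
      simp only [hg', if_neg hyn]; exact Or.inl (hFinvmem y hy)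
    · rw [Set.mem_singleton_iff] at hy
      simp only [hg', if_pos hy]; exact Or.inr rfl
  have hgf' : ∀ x ∈ s', g' (f' x) = x := by
    rintro x (hx | hx)
    · have hxm : x ≠ m := fun h => hm (h ▸ hx)
      simp only [hf', if_neg hxm, hg', if_neg (hFn x hx)]
      exact hFinvF x hx
    · rw [Set.mem_singleton_iff] at hx
      rw [hx]
      simp only [hf', if_pos rfl, hg', if_pos rfl]
  have hfg' : ∀ y ∈ t', f' (g' y) = y := by
    rintro y (hy | hy)
    · have hyn : y ≠ n := fun h => hncod (h ▸ hy)
      simp only [hg', if_neg hyn, hf', if_neg (hFinvm y hy)]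
      exact hFFinv y hy
    · rw [Set.mem_singleton_iff] at hy
      rw [hy]
      simp only [hg', if_pos rfl, hf', if_pos rfl]
  have hadj' : ∀ x ∈ s', ∀ y ∈ s',
      (RelMap (M := V) Language.adj ![f' x, f' y] ↔ RelMap (M := V) Language.adj ![x, y]) := by
    have key : ∀ y ∈ p.dom,
        (RelMap (M := V) Language.adj ![n, F y] ↔ RelMap (M := V) Language.adj ![m, y]) := by
      intro y hy
      rw [hnadj (F y) (hFmem y hy), hFinvF y hy]
    rintro x (hx | hx) y (hy | hy)
    · have hxm : x ≠ m := fun h => hm (h ▸ hx)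
      have hym : y ≠ m := fun h => hm (h ▸ hy)
      simp only [hf', if_neg hxm, if_neg hym]
      exact hFadj x hx y hy
    · rw [Set.mem_singleton_iff] at hy
      rw [hy]
      have hxm : x ≠ m := fun h => hm (h ▸ hx)
      simp only [hf', if_neg hxm, if_pos rfl]
      constructor
      · intro h; exact hsymm _ _ ((key x hx).1 (hsymm _ _ h))
      · intro h; exact hsymm _ _ ((key x hx).2 (hsymm _ _ h))
    · rw [Set.mem_singleton_iff] at hx
      rw [hx]
      have hym : y ≠ m := fun h => hm (h ▸ hy)
      simp only [hf', if_pos rfl, if_neg hym]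
      exact key y hy
    · rw [Set.mem_singleton_iff] at hx
      rw [Set.mem_singleton_iff] at hy
      rw [hx, hy]
      simp only [hf', if_pos rfl]
      exact ⟨fun h => absurd h (hirr n), fun h => absurd h (hirr m)⟩
  set q := mkPE s' t' f' g' hf'mem hg'mem hgf' hfg' hadj' with hq
  have hqfg : q.dom.FG := by
    rw [hq, mkPE_dom]
    exact relSub_fg (hdfin.union (Set.finite_singleton m))
  refine ⟨⟨q, hqfg⟩, Or.inr rfl, ?_⟩
  show p ≤ q
  rw [PartialEquiv.le_iff]
  refine ⟨?_, ?_, ?_⟩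
  · intro x hx; exact Or.inl hx
  · intro y hy; exact Or.inl hy
  · intro x
    apply Subtype.ext
    show (p.toEquiv x : V) = f' (x : V)
    have hxm : (x : V) ≠ m := fun h => hm (h ▸ x.2)
    simp only [hf', if_neg hxm, hF, dif_pos x.2]


theorem exists_auto [Countable V]
    (hsymm : ∀ x y : V, RelMap Language.adj ![x, y] → RelMap Language.adj ![y, x])
    (hirr : ∀ x : V, ¬ RelMap Language.adj ![x, x])
    (hext : ∀ A B : Finset V, Disjoint A B → ∃ v, v ∉ A ∧ v ∉ B ∧
      (∀ a ∈ A, RelMap Language.adj ![v, a]) ∧ ∀ b ∈ B, ¬ RelMap Language.adj ![v, b])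
    (Af : Finset V) (v w : V) (hv : v ∉ Af) (hw : w ∉ Af)
    (hvw : ∀ a ∈ Af, (RelMap (M := V) Language.adj ![v, a] ↔ RelMap (M := V) Language.adj ![w, a])) :
    ∃ σ : V ≃[Language.graph] V, (∀ a ∈ Af, σ a = a) ∧ σ v = w := by
  classical
  set s : Set V := ↑Af ∪ {v} with hs
  set t : Set V := ↑Af ∪ {w} with ht
  set f₀ : V → V := fun x => if x = v then w else x with hf₀
  set g₀ : V → V := fun y => if y = w then v else y with hg₀
  have hf₀v : f₀ v = w := by simp [hf₀]
  have hf₀a : ∀ a ∈ Af, f₀ a = a := by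
    intro a ha
    have : a ≠ v := fun h => hv (h ▸ ha)
    simp [hf₀, this]
  have hg₀w : g₀ w = v := by simp [hg₀]
  have hg₀a : ∀ a ∈ Af, g₀ a = a := by
    intro a ha
    have : a ≠ w := fun h => hw (h ▸ ha)
    simp [hg₀, this]
  have hfmem : ∀ x ∈ s, f₀ x ∈ t := by
    rintro x (hx | hx)
    · rw [hf₀a x hx]; exact Or.inl hx
    · rw [Set.mem_singleton_iff] at hx; rw [hx, hf₀v]; exact Or.inr rfl
  have hgmem : ∀ y ∈ t, g₀ y ∈ s := by
    rintro y (hy | hy)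
    · rw [hg₀a y hy]; exact Or.inl hy
    · rw [Set.mem_singleton_iff] at hy; rw [hy, hg₀w]; exact Or.inr rfl
  have hgf : ∀ x ∈ s, g₀ (f₀ x) = x := by
    rintro x (hx | hx)
    · rw [hf₀a x hx, hg₀a x hx]
    · rw [Set.mem_singleton_iff] at hx; rw [hx, hf₀v, hg₀w]
  have hfg : ∀ y ∈ t, f₀ (g₀ y) = y := by
    rintro y (hy | hy)
    · rw [hg₀a y hy, hf₀a y hy]
    · rw [Set.mem_singleton_iff] at hy; rw [hy, hg₀w, hf₀v]
  have hadj : ∀ x ∈ s, ∀ y ∈ s,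
      (RelMap (M := V) Language.adj ![f₀ x, f₀ y] ↔ RelMap (M := V) Language.adj ![x, y]) := by
    rintro x (hx | hx) y (hy | hy)
    · rw [hf₀a x hx, hf₀a y hy]
    · rw [Set.mem_singleton_iff] at hy
      rw [hy, hf₀a x hx, hf₀v]
      constructor
      · intro h; exact hsymm _ _ ((hvw x hx).2 (hsymm _ _ h))
      · intro h; exact hsymm _ _ ((hvw x hx).1 (hsymm _ _ h))
    · rw [Set.mem_singleton_iff] at hx
      rw [hx, hf₀a y hy, hf₀v]
      exact (hvw y hy).symm
    · rw [Set.mem_singleton_iff] at hx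
      rw [Set.mem_singleton_iff] at hy
      rw [hx, hy, hf₀v]
      exact ⟨fun h => absurd h (hirr w), fun h => absurd h (hirr v)⟩
  set p := mkPE s t f₀ g₀ hfmem hgmem hgf hfg hadj with hp
  have hpfg : p.dom.FG := by
    rw [hp, mkPE_dom]
    exact relSub_fg ((Af.finite_toSet).union (Set.finite_singleton v))
  obtain ⟨σ, hle⟩ := Language.equiv_between_cg (Structure.cg_of_countable)
    (Structure.cg_of_countable) ⟨p, hpfg⟩
    (isExtensionPair hsymm hirr hext) (isExtensionPair hsymm hirr hext)
  have hσval : ∀ x (hx : x ∈ s), σ x = f₀ x := by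
    intro x hx
    have h2 := PartialEquiv.toEquiv_inclusion_apply hle
      (⟨x, hx⟩ : (⟨p, hpfg⟩ : Language.graph.FGEquiv V V).1.dom)
    have h3 := congrArg Subtype.val h2
    rw [show ∀ (y : p.dom), ((σ.toEmbedding.toPartialEquiv.toEquiv
      (Substructure.inclusion (PartialEquiv.dom_le_dom hle) y) : V)) = σ (y : V) from
        fun y => rfl] at h3
    exact h3.trans rfl
  refine ⟨σ, fun a ha => ?_, ?_⟩
  · rw [hσval a (Or.inl ha)]; exact hf₀a a ha
  · rw [hσval v (Or.inr rfl)]; exact hf₀v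

end Stmt10Aux

/-- A subset `S` of the vertices of the Rado graph (a countable graph with the
extension property) is supported by a finite set `A` (every automorphism fixing `A`
pointwise maps `S` to itself) iff `S` is first-order definable in the language of
graphs with parameters from `A`. -/

theorem stmt10 {V : Type} [Countable V] [Infinite V]
    (G : SimpleGraph V) (hG : HasExtensionProperty G)
    (S : Set V) (A : Set V) (hA : A.Finite) :
    (∀ σ : G ≃g G, (∀ a ∈ A, σ a = a) → σ '' S = S) ↔
      (letI := G.structure; A.Definable₁ Language.graph S) := by
  classical
  letI := G.structure
  have hsymm : ∀ x y : V, Language.Structure.RelMap Language.adj ![x, y] →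
      Language.Structure.RelMap Language.adj ![y, x] := fun x y h => G.symm.symm x y h
  have hirr : ∀ x : V, ¬ Language.Structure.RelMap Language.adj ![x, x] :=
    fun x h => G.loopless.irrefl x h
  have hext : ∀ A B : Finset V, Disjoint A B → ∃ v, v ∉ A ∧ v ∉ B ∧
      (∀ a ∈ A, Language.Structure.RelMap Language.adj ![v, a]) ∧
      ∀ b ∈ B, ¬ Language.Structure.RelMap Language.adj ![v, b] := hG
  constructor
  · -- supported → definable
    intro hsupp
    show A.Definable Language.graph {x : Fin 1 → V | x 0 ∈ S}
    set Af : Finset V := hA.toFinset with hAfdef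
    have hmemAf : ∀ a, a ∈ Af ↔ a ∈ A := fun a => hA.mem_toFinset
    have homog : ∀ v w : V, v ∉ Af → w ∉ Af → (∀ a ∈ Af, (G.Adj v a ↔ G.Adj w a)) →
        v ∈ S → w ∈ S := by
      intro v w hv hw hvw hvS
      obtain ⟨σ, hfix, hσv⟩ := Stmt10Aux.exists_auto hsymm hirr hext Af v w hv hw hvw
      let σG : G ≃g G := ⟨σ.toEquiv, fun {a b} => σ.map_rel Language.adj ![a, b]⟩
      have himg := hsupp σG (fun a ha => hfix a ((hmemAf a).2 ha))
      rw [← himg]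
      exact ⟨v, hvS, hσv⟩
    set pat : V → Finset V := fun v => Af.filter (fun a => G.Adj v a) with hpat
    have defEq : ∀ a ∈ A, A.Definable Language.graph {x : Fin 1 → V | x 0 = a} := by
      intro a ha
      rw [Set.definable_iff_exists_formula_sum]
      refine ⟨Language.Term.equal (Language.Term.var (Sum.inr 0))
        (Language.Term.var (Sum.inl ⟨a, ha⟩)), ?_⟩
      ext x
      simp
    have defAdj : ∀ a ∈ A, A.Definable Language.graph {x : Fin 1 → V | G.Adj (x 0) a} := by
      intro a ha
      rw [Set.definable_iff_exists_formula_sum]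
      refine ⟨Language.adj.formula₂ (Language.Term.var (Sum.inr 0))
        (Language.Term.var (Sum.inl ⟨a, ha⟩)), ?_⟩
      ext x
      simp only [Set.mem_setOf_eq, Language.Formula.realize_rel₂, Language.Term.realize_var,
        Sum.elim_inr, Sum.elim_inl]
      exact Iff.rfl
    set EqS : V → Set (Fin 1 → V) := fun a => if h : a ∈ A then {x | x 0 = a} else ∅ with hEqS
    have defEqS : ∀ a, A.Definable Language.graph (EqS a) := by
      intro a; rw [hEqS]; dsimp only; split
      · exact defEq a ‹_›
      · exact Set.definable_empty
    set AdjS : V → Set (Fin 1 → V) :=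
      fun a => if h : a ∈ A then {x | G.Adj (x 0) a} else Set.univ with hAdjS
    have defAdjS : ∀ a, A.Definable Language.graph (AdjS a) := by
      intro a; rw [hAdjS]; dsimp only; split
      · exact defAdj a ‹_›
      · exact Set.definable_univ
    set NotAf : Set (Fin 1 → V) := ⋂ a ∈ Af, (EqS a)ᶜ with hNotAf
    have defNotAf : A.Definable Language.graph NotAf :=
      Set.definable_biInter_finset (fun a => (defEqS a).compl) Af
    set Pat : Finset V → Set (Fin 1 → V) :=
      fun P => ⋂ a ∈ Af, (if a ∈ P then AdjS a else (AdjS a)ᶜ) with hPat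
    have defPat : ∀ P, A.Definable Language.graph (Pat P) := by
      intro P
      refine Set.definable_biInter_finset (fun a => ?_) Af
      split
      · exact defAdjS a
      · exact (defAdjS a).compl
    set D : Finset V → Set (Fin 1 → V) :=
      fun P => if (∃ v₀, v₀ ∉ Af ∧ v₀ ∈ S ∧ pat v₀ = P) then (NotAf ∩ Pat P) else ∅ with hD
    have defD : ∀ P, A.Definable Language.graph (D P) := by
      intro P; rw [hD]; dsimp only; split
      · exact defNotAf.inter (defPat P)
      · exact Set.definable_empty
    set Sing : V → Set (Fin 1 → V) := fun a => if a ∈ S then EqS a else ∅ with hSing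
    have defSing : ∀ a, A.Definable Language.graph (Sing a) := by
      intro a; rw [hSing]; dsimp only; split
      · exact defEqS a
      · exact Set.definable_empty
    have defT : A.Definable Language.graph
        ((⋃ a ∈ Af, Sing a) ∪ ⋃ P ∈ Af.powerset, D P) :=
      (Set.definable_biUnion_finset defSing Af).union
        (Set.definable_biUnion_finset defD Af.powerset)
    suffices hTS : {x : Fin 1 → V | x 0 ∈ S} =
        ((⋃ a ∈ Af, Sing a) ∪ ⋃ P ∈ Af.powerset, D P) by rw [hTS]; exact defT
    ext x
    simp only [Set.mem_setOf_eq, Set.mem_union]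
    constructor
    · intro hxS
      by_cases hx0 : x 0 ∈ Af
      · left
        refine Set.mem_biUnion hx0 ?_
        rw [hSing]; dsimp only; rw [if_pos hxS, hEqS]; dsimp only
        rw [dif_pos ((hmemAf _).1 hx0)]
        exact rfl
      · right
        refine Set.mem_biUnion (Finset.mem_powerset.2 (Finset.filter_subset (fun a => G.Adj (x 0) a) Af)) ?_
        rw [hD]; dsimp only
        rw [if_pos ⟨x 0, hx0, hxS, rfl⟩]
        constructor
        · rw [hNotAf]
          simp only [Set.mem_iInter]
          intro a ha
          rw [hEqS]; dsimp only; rw [dif_pos ((hmemAf _).1 ha)]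
          intro hcon
          exact hx0 (by rw [Set.mem_setOf_eq] at hcon; rw [hcon]; exact ha)
        · rw [hPat]
          simp only [Set.mem_iInter]
          intro a ha
          by_cases hadj : G.Adj (x 0) a
          · have hmem : a ∈ pat (x 0) := by rw [hpat]; exact Finset.mem_filter.2 ⟨ha, hadj⟩
            rw [if_pos hmem, hAdjS]; dsimp only; rw [dif_pos ((hmemAf _).1 ha)]
            exact hadj
          · have hmem : a ∉ pat (x 0) := by
              rw [hpat]; dsimp only; rw [Finset.mem_filter]; exact fun h => hadj h.2
            rw [if_neg hmem, hAdjS]; dsimp only; rw [dif_pos ((hmemAf _).1 ha)]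
            exact hadj
    · rintro (hx | hx)
      · rw [Set.mem_iUnion₂] at hx
        obtain ⟨a, ha, hxa⟩ := hx
        rw [hSing] at hxa; dsimp only at hxa
        by_cases haS : a ∈ S
        · rw [if_pos haS, hEqS] at hxa; dsimp only at hxa
          rw [dif_pos ((hmemAf _).1 ha)] at hxa
          rw [Set.mem_setOf_eq] at hxa
          rw [hxa]; exact haS
        · rw [if_neg haS] at hxa; exact absurd hxa (Set.notMem_empty x)
      · rw [Set.mem_iUnion₂] at hx
        obtain ⟨P, hP, hxP⟩ := hx
        rw [hD] at hxP; dsimp only at hxP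
        by_cases hgood : ∃ v₀, v₀ ∉ Af ∧ v₀ ∈ S ∧ pat v₀ = P
        · rw [if_pos hgood] at hxP
          obtain ⟨v₀, hv₀Af, hv₀S, hv₀P⟩ := hgood
          obtain ⟨hxNot, hxPat⟩ := hxP
          rw [hNotAf] at hxNot; simp only [Set.mem_iInter] at hxNot
          rw [hPat] at hxPat; simp only [Set.mem_iInter] at hxPat
          have hx0Af : x 0 ∉ Af := by
            intro h
            have h9 := hxNot (x 0) h
            rw [hEqS] at h9; dsimp only at h9
            rw [dif_pos ((hmemAf _).1 h)] at h9
            exact h9 rfl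
          have hadjiff : ∀ a ∈ Af, (G.Adj v₀ a ↔ G.Adj (x 0) a) := by
            intro a ha
            have h1 : G.Adj v₀ a ↔ a ∈ P := by
              rw [← hv₀P, hpat]; dsimp only
              rw [Finset.mem_filter]
              exact ⟨fun h => ⟨ha, h⟩, fun h => h.2⟩
            have h2 := hxPat a ha
            by_cases haP : a ∈ P
            · rw [if_pos haP, hAdjS] at h2; dsimp only at h2
              rw [dif_pos ((hmemAf _).1 ha)] at h2
              rw [h1]
              exact iff_of_true haP h2
            · rw [if_neg haP, hAdjS] at h2; dsimp only at h2
              rw [dif_pos ((hmemAf _).1 ha)] at h2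
              rw [h1]
              exact iff_of_false haP h2
          exact homog v₀ (x 0) hv₀Af hx0Af hadjiff hv₀S
        · rw [if_neg hgood] at hxP; exact absurd hxP (Set.notMem_empty x)
  · -- definable → supported
    intro hdef σ hσ
    obtain ⟨φ, hφ⟩ := Set.definable_iff_exists_formula_sum.1 hdef
    let g : V ≃[Language.graph] V :=
      { toEquiv := σ.toEquiv
        map_fun' := fun {n} F _ => isEmptyElim F
        map_rel' := fun {n} r x => by
          match n, r with
          | 2, .adj => exact σ.map_adj_iff }
    have hmem : ∀ y : V, y ∈ S ↔ φ.Realize (Sum.elim (Subtype.val : ↥A → V) ![y]) := by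
      intro y
      have h := Set.ext_iff.1 hφ ![y]
      simpa using h
    have key : ∀ y : V, σ y ∈ S ↔ y ∈ S := by
      intro y
      rw [hmem, hmem]
      have harg : (⇑g ∘ Sum.elim (Subtype.val : ↥A → V) ![y]) = Sum.elim Subtype.val ![σ y] := by
        funext i
        rcases i with a | i
        · exact hσ a a.2
        · fin_cases i; rfl
      rw [← harg]
      exact Language.StrongHomClass.realize_formula g φ
    ext y
    constructor
    · rintro ⟨z, hz, rfl⟩; exact (key z).2 hz
    · intro hy
      exact ⟨σ.symm y, (key (σ.symm y)).1 (by rw [σ.apply_symm_apply]; exact hy),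
        σ.apply_symm_apply y⟩
end

section
/- The function ν_α defined on finitely-supported (equivalently, definable-with-parameters) subsets S ⊆ V of the Rado graph by ν_α(S) = Σ_{j=1}^{2^n} [v_j ∈ S] ∏_{i=1}^n (α·[E(v_j,a_i)] + (1-α)·[¬E(v_j,a_i)]), where {a_1,…,a_n} is a support of S and v_1,…,v_{2^n} realize all adjacency patterns to {a_1,…,a_n}, is well-defined: its value does not depend on the choice of the representatives v_j. -/
/-- The finite list of vertices `a 0, …, a (n-1)` supports the set `S`:
every automorphism of `G` fixing each `a i` maps `S` to itself. -/
def SupportsSet {V : Type} (G : SimpleGraph V) {n : ℕ} (a : Fin n → V) (S : Set V) : Prop :=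
  ∀ σ : G ≃g G, (∀ i, σ (a i) = a i) → σ '' S = S

/-- The family `v` realizes all `2^n` adjacency patterns to `a 0, …, a (n-1)`:
`v c` lies outside the support and is adjacent to `a i` exactly when `c i = true`. -/
def RealizesPatterns {V : Type} (G : SimpleGraph V) {n : ℕ}
    (a : Fin n → V) (v : (Fin n → Bool) → V) : Prop :=
  ∀ c : Fin n → Bool, v c ∉ Set.range a ∧ ∀ i, (G.Adj (v c) (a i) ↔ c i = true)

open scoped Classical in
/-- `ν_α(S) = Σ_j [v_j ∈ S] ∏_i (α[E(v_j,a_i)] + (1-α)[¬E(v_j,a_i)])`, the candidate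
value of the measure of `S`, computed from pattern representatives `v`. -/
noncomputable def patVal {V : Type} (α : ℝ) {n : ℕ} (S : Set V)
    (v : (Fin n → Bool) → V) : ℝ :=
  ∑ c : Fin n → Bool,
    (if v c ∈ S then (1:ℝ) else 0) * ∏ i, (if c i then α else 1 - α)

section Helpers

open FirstOrder Language Structure Substructure

open scoped Classical

section Helpers

variable {V : Type} [Language.graph.Structure V] [V ⊨ Theory.simpleGraph]

local notation "G" => simpleGraphOfStructure V

lemma relMap_adj_iff (z : Fin 2 → V) : RelMap adj z ↔ (G).Adj (z 0) (z 1) := by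
  have h : z = ![z 0, z 1] := by ext i; fin_cases i <;> rfl
  rw [h]; exact Iff.rfl

/-- Build an `FGEquiv` of a graph structure from a finite partial graph isomorphism. -/
noncomputable def graphFGEquiv (D : Set V) (hD : D.Finite)
    (π : V → V) (hinj : Set.InjOn π D)
    (hadj : ∀ x ∈ D, ∀ y ∈ D, ((G).Adj (π x) (π y) ↔ (G).Adj x y)) :
    Language.graph.FGEquiv V V :=
  have hd : ((closure Language.graph D : Substructure Language.graph V) : Set V) = D :=
    Set.ext fun _ => mem_closure_iff_of_isRelational _ _ _
  have hc : ((closure Language.graph (π '' D) : Substructure Language.graph V) : Set V)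
      = π '' D := Set.ext fun _ => mem_closure_iff_of_isRelational _ _ _
  let e : (closure Language.graph D : Substructure Language.graph V) ≃
      (closure Language.graph (π '' D) : Substructure Language.graph V) :=
    (Equiv.setCongr hd).trans ((Equiv.Set.imageOfInjOn π D hinj).trans (Equiv.setCongr hc.symm))
  ⟨⟨closure Language.graph D, closure Language.graph (π '' D),
    { toEquiv := e
      map_fun' := fun {l} f => isEmptyElim f
      map_rel' := fun {l} r x => by
        match l, r with
        | 2, .adj =>
          have h0 : (x 0 : V) ∈ D := (mem_closure_iff_of_isRelational _ _ _).1 (x 0).2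
          have h1 : (x 1 : V) ∈ D := (mem_closure_iff_of_isRelational _ _ _).1 (x 1).2
          exact Iff.trans (relMap_adj_iff (V := V) (fun i => ((e (x i) : V))))
            (Iff.trans (hadj _ h0 _ h1)
              (relMap_adj_iff (V := V) (fun i => ((x i : V)))).symm) }⟩, fg_closure hD⟩

lemma graphFGEquiv_mem_dom (D : Set V) (hD : D.Finite)
    (π : V → V) (hinj : Set.InjOn π D)
    (hadj : ∀ x ∈ D, ∀ y ∈ D, ((G).Adj (π x) (π y) ↔ (G).Adj x y)) (x : V) (hx : x ∈ D) :
    x ∈ (graphFGEquiv D hD π hinj hadj).1.dom :=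
  (mem_closure_iff_of_isRelational _ _ _).2 hx

lemma graphFGEquiv_mem_dom_iff (D : Set V) (hD : D.Finite)
    (π : V → V) (hinj : Set.InjOn π D)
    (hadj : ∀ x ∈ D, ∀ y ∈ D, ((G).Adj (π x) (π y) ↔ (G).Adj x y)) (x : V) :
    x ∈ (graphFGEquiv D hD π hinj hadj).1.dom ↔ x ∈ D :=
  mem_closure_iff_of_isRelational _ _ _

lemma graphFGEquiv_apply (D : Set V) (hD : D.Finite)
    (π : V → V) (hinj : Set.InjOn π D)
    (hadj : ∀ x ∈ D, ∀ y ∈ D, ((G).Adj (π x) (π y) ↔ (G).Adj x y)) (x : V)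
    (hx : x ∈ (graphFGEquiv D hD π hinj hadj).1.dom) :
    ((graphFGEquiv D hD π hinj hadj).1.toEquiv ⟨x, hx⟩ : V) = π x := rfl

/-- Adjacency is preserved by a partial equivalence of graph structures. -/
lemma partialEquiv_adj (f : V ≃ₚ[Language.graph] V) (x y : f.dom) :
    (G).Adj (f.toEquiv x : V) (f.toEquiv y : V) ↔ (G).Adj (x : V) (y : V) := by
  have h := f.toEquiv.map_rel' (n := 2) .adj ![x, y]
  have h1 := relMap_adj_iff (V := V) (fun i => ((f.toEquiv.toFun ∘ ![x, y]) i : V))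
  have h2 := relMap_adj_iff (V := V) (fun i => ((![x, y] i : V)))
  exact Iff.trans h1.symm (Iff.trans h h2)

lemma graph_isExtensionPair (hG : HasExtensionProperty (G)) :
    Language.graph.IsExtensionPair V V := by
  intro f m
  by_cases hm : m ∈ f.1.dom
  · exact ⟨f, hm, le_refl f⟩
  obtain ⟨s, hsfin, xhs⟩ := fg_def.1 f.2
  have hDeq : ((f.1.dom : Substructure Language.graph V) : Set V) = s := by
    rw [← xhs, closure_eq_of_isRelational]
  have hDfin : ((f.1.dom : Substructure Language.graph V) : Set V).Finite := hDeq ▸ hsfin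
  set π0 : V → V := fun x => if h : x ∈ f.1.dom then (f.1.toEquiv ⟨x, h⟩ : V) else x with hπ0
  have hπ0eq : ∀ x (h : x ∈ f.1.dom), π0 x = (f.1.toEquiv ⟨x, h⟩ : V) := by
    intro x h; simp [hπ0, dif_pos h]
  have hπ0inj : Set.InjOn π0 (f.1.dom : Set V) := by
    intro x hx y hy hxy
    rw [hπ0eq x hx, hπ0eq y hy] at hxy
    have := f.1.toEquiv.injective (Subtype.ext hxy)
    exact congrArg Subtype.val this
  have hπ0adj : ∀ x ∈ (f.1.dom : Set V), ∀ y ∈ (f.1.dom : Set V),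
      ((G).Adj (π0 x) (π0 y) ↔ (G).Adj x y) := by
    intro x hx y hy
    rw [hπ0eq x hx, hπ0eq y hy]
    exact partialEquiv_adj f.1 ⟨x, hx⟩ ⟨y, hy⟩
  set A : Finset V := (hDfin.toFinset.filter (fun y => (G).Adj m y)).image π0 with hA
  set B : Finset V := (hDfin.toFinset.filter (fun y => ¬ (G).Adj m y)).image π0 with hB
  have hAB : Disjoint A B := by
    rw [Finset.disjoint_left]
    intro z hzA hzB
    obtain ⟨y1, hy1, rfl⟩ := Finset.mem_image.1 hzA
    obtain ⟨y2, hy2, he⟩ := Finset.mem_image.1 hzB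
    simp only [Finset.mem_filter, Set.Finite.mem_toFinset] at hy1 hy2
    exact hy2.2 (hπ0inj hy2.1 hy1.1 he ▸ hy1.2)
  obtain ⟨u, huA, huB, huadj, hunadj⟩ := hG A B hAB
  have hπ0mem : ∀ y ∈ (f.1.dom : Set V), ((G).Adj m y → π0 y ∈ A)
      ∧ (¬ (G).Adj m y → π0 y ∈ B) := by
    intro y hy
    exact ⟨fun h => Finset.mem_image.2 ⟨y, Finset.mem_filter.2 ⟨hDfin.mem_toFinset.2 hy, h⟩, rfl⟩,
      fun h => Finset.mem_image.2 ⟨y, Finset.mem_filter.2 ⟨hDfin.mem_toFinset.2 hy, h⟩, rfl⟩⟩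
  set π : V → V := fun x => if x = m then u else π0 x with hπ
  have hπm : π m = u := by simp [hπ]
  have hπne : ∀ x ∈ (f.1.dom : Set V), π x = π0 x := by
    intro x hx
    have : x ≠ m := fun h => hm (h ▸ hx)
    simp [hπ, this]
  have humA : ∀ y ∈ (f.1.dom : Set V), ((G).Adj u (π0 y) ↔ (G).Adj m y) := by
    intro y hy
    constructor
    · intro h
      by_contra hna
      exact hunadj _ ((hπ0mem y hy).2 hna) h
    · intro h
      exact huadj _ ((hπ0mem y hy).1 h)
  set D' : Set V := insert m (f.1.dom : Set V) with hD'
  have hD'fin : D'.Finite := hDfin.insert m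
  have hinj : Set.InjOn π D' := by
    intro x hx y hy hxy
    rcases Set.mem_insert_iff.1 hx with rfl | hx' <;>
      rcases Set.mem_insert_iff.1 hy with h | hy'
    · exact h.symm
    · exfalso
      rw [hπm, hπne y hy'] at hxy
      rcases hπ0mem y hy' with ⟨h1, h2⟩
      by_cases hadj : (G).Adj x y
      · exact huA (hxy ▸ h1 hadj)
      · exact huB (hxy ▸ h2 hadj)
    · exfalso
      subst h
      rw [hπm, hπne x hx'] at hxy
      rcases hπ0mem x hx' with ⟨h1, h2⟩
      by_cases hadj : (G).Adj y x
      · exact huA (hxy ▸ h1 hadj)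
      · exact huB (hxy ▸ h2 hadj)
    · rw [hπne x hx', hπne y hy'] at hxy
      exact hπ0inj hx' hy' hxy
  have hadj' : ∀ x ∈ D', ∀ y ∈ D', ((G).Adj (π x) (π y) ↔ (G).Adj x y) := by
    intro x hx y hy
    rcases Set.mem_insert_iff.1 hx with rfl | hx' <;>
      rcases Set.mem_insert_iff.1 hy with h | hy'
    · subst h
      rw [hπm]
      simp [SimpleGraph.irrefl]
    · rw [hπm, hπne y hy']
      exact humA y hy'
    · subst h
      rw [hπm, hπne x hx']
      exact ((SimpleGraph.adj_comm _ _ _).trans (humA x hx')).trans (SimpleGraph.adj_comm _ _ _)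
    · rw [hπne x hx', hπne y hy']
      exact hπ0adj x hx' y hy'
  refine ⟨graphFGEquiv D' hD'fin π hinj hadj', graphFGEquiv_mem_dom _ _ _ _ _ _
    (Set.mem_insert m _), ?_, ?_⟩
  · intro x hx
    exact graphFGEquiv_mem_dom _ _ _ _ _ _ (Set.mem_insert_of_mem _ hx)
  · ext ⟨x, hx⟩
    have hx' : x ∈ D' := Set.mem_insert_of_mem _ hx
    have : ((graphFGEquiv D' hD'fin π hinj hadj').1.toEquiv
        ⟨x, graphFGEquiv_mem_dom _ _ _ _ _ _ hx'⟩ : V) = π x := rfl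
    calc _ = π x := this
    _ = π0 x := hπne x hx
    _ = _ := hπ0eq x hx

end Helpers

/-- Well-definedness of `ν_α`: its value does not depend on the choice of the
pattern representatives `v_j`. -/
theorem stmt12 {V : Type} [Countable V] [Infinite V]
    (G : SimpleGraph V) (hG : HasExtensionProperty G)
    (α : ℝ) (hα : α ∈ Set.Icc (0:ℝ) 1)
    (S : Set V) {n : ℕ} (a : Fin n → V) (ha : Function.Injective a)
    (hsupp : SupportsSet G a S)
    (v w : (Fin n → Bool) → V)
    (hv : RealizesPatterns G a v) (hw : RealizesPatterns G a w) :
    patVal α S v = patVal α S w := by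
  letI := G.structure
  have hGeq : simpleGraphOfStructure V = G := G.simpleGraphOfStructure
  have hG' : HasExtensionProperty (simpleGraphOfStructure V) := by rw [hGeq]; exact hG
  have key : ∀ c : Fin n → Bool, (v c ∈ S ↔ w c ∈ S) := by
    intro c
    set D : Set V := insert (v c) (Set.range a) with hD
    have hDfin : D.Finite := (Set.finite_range a).insert _
    set π : V → V := fun x => if x = v c then w c else x with hπ
    have hπv : π (v c) = w c := by simp [hπ]
    have hπa : ∀ i, π (a i) = a i := by
      intro i
      have : a i ≠ v c := fun h => (hv c).1 (h ▸ Set.mem_range_self i)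
      simp [hπ, this]
    have hinj : Set.InjOn π D := by
      intro x hx y hy hxy
      rcases Set.mem_insert_iff.1 hx with rfl | ⟨i, rfl⟩ <;>
        rcases Set.mem_insert_iff.1 hy with h | ⟨j, rfl⟩
      · exact h.symm
      · exfalso
        rw [hπv, hπa j] at hxy
        exact (hw c).1 (Set.mem_of_eq_of_mem hxy (Set.mem_range_self j))
      · exfalso
        subst h
        rw [hπv, hπa i] at hxy
        exact (hw c).1 (Set.mem_of_eq_of_mem hxy.symm (Set.mem_range_self i))
      · rw [hπa i, hπa j] at hxy; exact hxy
    have hadj : ∀ x ∈ D, ∀ y ∈ D,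
        ((simpleGraphOfStructure V).Adj (π x) (π y) ↔ (simpleGraphOfStructure V).Adj x y) := by
      rw [hGeq]
      intro x hx y hy
      rcases Set.mem_insert_iff.1 hx with rfl | ⟨i, rfl⟩ <;>
        rcases Set.mem_insert_iff.1 hy with h | ⟨j, rfl⟩
      · subst h; rw [hπv]; simp [SimpleGraph.irrefl]
      · rw [hπv, hπa j]
        exact ((hw c).2 j).trans ((hv c).2 j).symm
      · subst h
        rw [hπv, hπa i, G.adj_comm (a i) (w c), G.adj_comm (a i) (v c)]
        exact ((hw c).2 i).trans ((hv c).2 i).symm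
      · rw [hπa i, hπa j]
    obtain ⟨F, hle⟩ := equiv_between_cg Structure.cg_of_countable Structure.cg_of_countable
      (graphFGEquiv D hDfin π hinj hadj) (graph_isExtensionPair hG') (graph_isExtensionPair hG')
    have hF : ∀ x (hx : x ∈ D), F x = π x := by
      intro x hx
      have hmem := graphFGEquiv_mem_dom D hDfin π hinj hadj x hx
      have h := PartialEquiv.subtype_toEquiv_inclusion hle
      have h2 := DFunLike.congr_fun h ⟨x, hmem⟩
      have h4 : ((graphFGEquiv D hDfin π hinj hadj).1.toEquiv ⟨x, hmem⟩ : V) = π x := rfl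
      have h5 : ((graphFGEquiv D hDfin π hinj hadj).1.toEquiv ⟨x, hmem⟩ : V) = F x := by
        exact h2.symm
      exact h5.symm.trans h4
    have hmr : ∀ x y : V, G.Adj (F x) (F y) ↔ G.Adj x y := by
      intro x y
      have := F.map_rel' (n := 2) .adj ![x, y]
      rw [← hGeq]
      exact Iff.trans (relMap_adj_iff (V := V) (fun i => F (![x, y] i))).symm
        (Iff.trans this (relMap_adj_iff (V := V) ![x, y]))
    set σ : G ≃g G := ⟨F.toEquiv, by intro x y; exact hmr x y⟩ with hσ
    have hσa : ∀ i, σ (a i) = a i := fun i =>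
      (hF (a i) (Set.mem_insert_of_mem _ (Set.mem_range_self i))).trans (hπa i)
    have hσv : σ (v c) = w c := (hF (v c) (Set.mem_insert _ _)).trans hπv
    have hS := hsupp σ hσa
    constructor
    · intro h
      exact hS ▸ hσv ▸ Set.mem_image_of_mem σ h
    · intro h
      rw [← hS] at h
      obtain ⟨s, hs, hsv⟩ := h
      have : s = v c := σ.injective (by rw [hsv, hσv])
      exact this ▸ hs
  unfold patVal
  exact Finset.sum_congr rfl fun c _ => by rw [if_congr (key c) rfl rfl]
end Helpers
end

section
/- The measure ν_α on finitely-supported subsets of the Rado graph vertices is equivariant and finitely additive: ν_α(σ • S) = ν_α(S) for every automorphism σ, ν_α(V) = 1, and ν_α(S ⊎ T) = ν_α(S) + ν_α(T) for disjoint finitely-supported S, T. -/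
/-- A set is finitely supported if some finite list of vertices supports it. -/
def FinitelySupportedSet {V : Type} (G : SimpleGraph V) (S : Set V) : Prop :=
  ∃ (n : ℕ) (a : Fin n → V), Function.Injective a ∧ SupportsSet G a S

/-!
Each value of `ν` is computed from an injective support `a` and a family `v` of pattern
representatives, which exists by the extension property. An automorphism `σ`
transports `(a, v)` for `S` to `(σ ∘ a, σ ∘ v)` for `σ '' S`, leaving each summand of `ν_α`
unchanged. For `Set.univ` every indicator is `1` and the weights of the `2^n` patterns are the
terms of the expansion of `∏ i, (α + (1 - α)) = 1`. For additivity, the enumeration of the union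
of supports of `S` and `T` supports both, and with one family `v` the indicators of disjoint sets
add up.
-/

open Function

section Patterns

variable {V : Type} {G : SimpleGraph V}

theorem HasExtensionProperty.exists_adj_iff (hG : HasExtensionProperty G)
    {n : ℕ} {a : Fin n → V} (ha : Injective a) (c : Fin n → Bool) :
    ∃ w, w ∉ Set.range a ∧ ∀ i, (G.Adj w (a i) ↔ c i = true) := by
  classical
  let A := (Finset.univ.filter fun i => c i = true).image a
  let B := (Finset.univ.filter fun i => c i = false).image a
  have mem_A : ∀ i, c i = true → a i ∈ A := fun i hi =>
    Finset.mem_image_of_mem a (Finset.mem_filter.2 ⟨Finset.mem_univ i, hi⟩)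
  have mem_B : ∀ i, c i = false → a i ∈ B := fun i hi =>
    Finset.mem_image_of_mem a (Finset.mem_filter.2 ⟨Finset.mem_univ i, hi⟩)
  have hAB : Disjoint A B := by
    simp only [A, B, Finset.disjoint_left, Finset.mem_image, Finset.mem_filter,
      Finset.mem_univ, true_and]
    rintro _ ⟨i, hi, rfl⟩ ⟨j, hj, hji⟩
    exact Bool.false_ne_true ((ha hji ▸ hj).symm.trans hi)
  obtain ⟨w, hwA, hwB, hadj, hnadj⟩ := hG A B hAB
  refine ⟨w, ?_, fun i => ?_⟩
  · rintro ⟨i, rfl⟩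
    cases hc : c i
    exacts [hwB (mem_B i hc), hwA (mem_A i hc)]
  · cases hc : c i
    · simpa using hnadj _ (mem_B i hc)
    · simpa using hadj _ (mem_A i hc)

theorem HasExtensionProperty.exists_realizesPatterns (hG : HasExtensionProperty G) {n : ℕ}
    {a : Fin n → V} (ha : Injective a) :
    ∃ v, RealizesPatterns G a v := by
  choose v hv using hG.exists_adj_iff ha
  exact ⟨v, hv⟩

theorem RealizesPatterns.map {n : ℕ} {a : Fin n → V} {v : (Fin n → Bool) → V}
    (hv : RealizesPatterns G a v) (σ : G ≃g G) : RealizesPatterns G (σ ∘ a) (σ ∘ v) := by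
  intro c
  refine ⟨?_, fun i => (σ.map_adj_iff).trans ((hv c).2 i)⟩
  rintro ⟨i, hi⟩
  exact (hv c).1 ⟨i, σ.injective hi⟩

end Patterns

section Supports

variable {V : Type} {G : SimpleGraph V} {n : ℕ} {a : Fin n → V} {S T : Set V}

theorem supportsSet_univ (a : Fin n → V) : SupportsSet G a Set.univ :=
  fun σ _ => by rw [Set.image_univ, σ.surjective.range_eq]

theorem SupportsSet.union (hS : SupportsSet G a S) (hT : SupportsSet G a T) :
    SupportsSet G a (S ∪ T) :=
  fun σ hσ => by rw [Set.image_union, hS σ hσ, hT σ hσ]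

theorem SupportsSet.of_range_subset {m : ℕ} {b : Fin m → V} (hS : SupportsSet G a S)
    (hab : Set.range a ⊆ Set.range b) : SupportsSet G b S := by
  intro σ hσ
  refine hS σ fun i => ?_
  obtain ⟨j, hj⟩ := hab ⟨i, rfl⟩
  rw [← hj, hσ j]

/-- If `σ ∘ a` is fixed by `τ`, then `a` is fixed by the conjugate `σ⁻¹ τ σ`. -/
theorem SupportsSet.image (hS : SupportsSet G a S) (σ : G ≃g G) :
    SupportsSet G (σ ∘ a) (σ '' S) := by
  intro τ hτ
  let ρ : G ≃g G := (σ.trans τ).trans σ.symm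
  have hρ : ∀ i, ρ (a i) = a i := fun i => by
    simp only [ρ, RelIso.trans_apply, σ.symm_apply_eq]
    exact hτ i
  calc τ '' (σ '' S) = σ '' (ρ '' S) := by
        simp only [Set.image_image, ρ, RelIso.trans_apply, RelIso.apply_symm_apply]
    _ = σ '' S := by rw [hS ρ hρ]

theorem FinitelySupportedSet.exists_common_support (hS : FinitelySupportedSet G S)
    (hT : FinitelySupportedSet G T) :
    ∃ (n : ℕ) (a : Fin n → V), Injective a ∧ SupportsSet G a S ∧ SupportsSet G a T := by
  obtain ⟨_, b, -, hSb⟩ := hS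
  obtain ⟨_, c, -, hTc⟩ := hT
  obtain ⟨n, a, ha, hrange⟩ := ((Set.finite_range b).union (Set.finite_range c)).fin_param
  exact ⟨n, a, ha, hSb.of_range_subset (hrange ▸ Set.subset_union_left),
    hTc.of_range_subset (hrange ▸ Set.subset_union_right)⟩

end Supports

section PatVal

variable {V : Type} (α : ℝ) {n : ℕ} (v : (Fin n → Bool) → V)

theorem patVal_image {W : Type} {f : V → W} (hf : Injective f) (S : Set V) :
    patVal α (f '' S) (f ∘ v) = patVal α S v := by
  classical
  simp only [patVal, comp_apply, hf.mem_set_image]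

theorem patVal_univ : patVal α Set.univ v = 1 := by
  calc patVal α Set.univ v = ∏ _i : Fin n, ∑ b : Bool, (if b then α else 1 - α) := by
        simp only [patVal, Set.mem_univ, if_true, one_mul, Fintype.prod_sum]
    _ = 1 := by simp

theorem patVal_union {S T : Set V} (hST : Disjoint S T) :
    patVal α (S ∪ T) v = patVal α S v + patVal α T v := by
  simp only [patVal, ← Finset.sum_add_distrib, ← add_mul]
  refine Finset.sum_congr rfl fun c _ => ?_
  by_cases hS : v c ∈ S
  · simp [hS, Set.disjoint_left.mp hST hS]
  · by_cases hT : v c ∈ T <;> simp [hS, hT]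

end PatVal

theorem stmt13_general {V : Type}
    (G : SimpleGraph V) (hG : HasExtensionProperty G)
    (α : ℝ)
    (ν : Set V → ℝ)
    (hν : ∀ (S : Set V) {n : ℕ} (a : Fin n → V) (v : (Fin n → Bool) → V),
      Function.Injective a → SupportsSet G a S → RealizesPatterns G a v →
        ν S = patVal α S v) :
    (∀ (σ : G ≃g G) (S : Set V), FinitelySupportedSet G S → ν (σ '' S) = ν S) ∧
      ν Set.univ = 1 ∧
      (∀ S T : Set V, FinitelySupportedSet G S → FinitelySupportedSet G T →
        Disjoint S T → ν (S ∪ T) = ν S + ν T) := by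
  refine ⟨?_, ?_, ?_⟩
  · rintro σ S ⟨n, a, ha, hS⟩
    obtain ⟨v, hv⟩ := hG.exists_realizesPatterns ha
    rw [hν _ _ _ (σ.injective.comp ha) (hS.image σ) (hv.map σ), hν S a v ha hS hv,
      patVal_image α v σ.injective]
  · have ha : Injective (Fin.elim0 : Fin 0 → V) := fun i => i.elim0
    obtain ⟨v, hv⟩ := hG.exists_realizesPatterns ha
    rw [hν _ _ v ha (supportsSet_univ _) hv, patVal_univ]
  · intro S T hS hT hST
    obtain ⟨n, a, ha, hSa, hTa⟩ := hS.exists_common_support hT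
    obtain ⟨v, hv⟩ := hG.exists_realizesPatterns ha
    rw [hν _ a v ha (hSa.union hTa) hv, hν S a v ha hSa hv, hν T a v ha hTa hv,
      patVal_union α v hST]

/-- Equivariance, normalization and finite additivity of `ν_α` on finitely-supported
subsets of the Rado graph: here `ν` is any function satisfying the defining formula
of `ν_α` (via pattern representatives) on finitely-supported sets. -/
theorem stmt13 {V : Type} [Countable V] [Infinite V]
    (G : SimpleGraph V) (hG : HasExtensionProperty G)
    (α : ℝ) (hα : α ∈ Set.Icc (0:ℝ) 1)
    (ν : Set V → ℝ)
    (hν : ∀ (S : Set V) {n : ℕ} (a : Fin n → V) (v : (Fin n → Bool) → V),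
      Function.Injective a → SupportsSet G a S → RealizesPatterns G a v →
        ν S = patVal α S v) :
    (∀ (σ : G ≃g G) (S : Set V), FinitelySupportedSet G S → ν (σ '' S) = ν S) ∧
      ν Set.univ = 1 ∧
      (∀ S T : Set V, FinitelySupportedSet G S → FinitelySupportedSet G T →
        Disjoint S T → ν (S ∪ T) = ν S + ν T) :=
  stmt13_general G hG α ν hν
end

section
/- Let C be a distributive Markov category with a distributive Markov functor Ψ : C_ℕ → FinStoch, and suppose every object is 0 or pointed. Define f ∼ g : X → Y iff for all objects Z, naturals n, morphisms h : 1 → X⊗Z and k : Y⊗Z → n, Ψ(k∘(f⊗Z)∘h) = Ψ(k∘(g⊗Z)∘h). Then ∼ is a congruence: it is an equivalence relation on each hom-set, respected by composition and by the tensor product. -/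
open CategoryTheory CategoryTheory.Limits MonoidalCategory

/-- The numeral objects `0, 1, 2 = 1+1, 3 = 1+1+1, …` of a category with initial
object, monoidal unit and binary coproducts. -/
noncomputable def numeral (C : Type*) [Category C] [MonoidalCategory C]
    [HasInitial C] [HasBinaryCoproducts C] : ℕ → C
  | 0 => ⊥_ C
  | 1 => 𝟙_ C
  | (n + 2) => numeral C (n + 1) ⨿ 𝟙_ C

/-- A matrix is (row-)stochastic: nonnegative entries with rows summing to `1`.
Morphisms `m ⟶ n` in `FinStoch` are exactly such matrices. -/
def IsStochastic {m n : ℕ} (M : Matrix (Fin m) (Fin n) ℝ) : Prop :=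
  (∀ i j, 0 ≤ M i j) ∧ ∀ i, ∑ j, M i j = 1

variable {C : Type*} [Category C] [MonoidalCategory C] [SymmetricCategory C]
  [HasInitial C] [HasBinaryCoproducts C]

/-- The observational-equivalence relation `f ∼ g` determined by the functor `Ψ` to
`FinStoch`: all surrounding contexts `h : 1 ⟶ X ⊗ Z`, `k : Y ⊗ Z ⟶ n` (with `Z`
ancillary, `n` a numeral) give equal observations. -/
def MRel (Ψ : ∀ m n : ℕ, (numeral C m ⟶ numeral C n) → Matrix (Fin m) (Fin n) ℝ)
    {X Y : C} (f g : X ⟶ Y) : Prop :=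
  ∀ (Z : C) (n : ℕ) (h : 𝟙_ C ⟶ X ⊗ Z) (k : Y ⊗ Z ⟶ numeral C n),
    Ψ 1 n (h ≫ (f ▷ Z) ≫ k) = Ψ 1 n (h ≫ (g ▷ Z) ≫ k)

lemma MRel.whiskerRight' {Ψ : ∀ m n : ℕ, (numeral C m ⟶ numeral C n) → Matrix (Fin m) (Fin n) ℝ}
    {X Y : C} {f g : X ⟶ Y} (W : C) (hfg : MRel Ψ f g) : MRel Ψ (f ▷ W) (g ▷ W) := by
  intro Z n h k
  have key : ∀ (u : X ⟶ Y),
      h ≫ ((u ▷ W) ▷ Z) ≫ k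
        = (h ≫ (α_ X W Z).hom) ≫ (u ▷ (W ⊗ Z)) ≫ ((α_ Y W Z).inv ≫ k) := by
    intro u
    simp only [Category.assoc]
    rw [← MonoidalCategory.associator_naturality_left_assoc]
    simp
  exact (congrArg (Ψ 1 n) (key f)).trans ((hfg (W ⊗ Z) n (h ≫ (α_ X W Z).hom) ((α_ Y W Z).inv ≫ k)).trans (congrArg (Ψ 1 n) (key g)).symm)

lemma MRel.whiskerLeft' {Ψ : ∀ m n : ℕ, (numeral C m ⟶ numeral C n) → Matrix (Fin m) (Fin n) ℝ}
    {X Y : C} {f g : X ⟶ Y} (W : C) (hfg : MRel Ψ f g) : MRel Ψ (W ◁ f) (W ◁ g) := by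
  intro Z n h k
  have key : ∀ (u : X ⟶ Y),
      h ≫ ((W ◁ u) ▷ Z) ≫ k
        = (h ≫ ((β_ W X).hom ▷ Z)) ≫ ((u ▷ W) ▷ Z) ≫ (((β_ Y W).hom ▷ Z) ≫ k) := by
    intro u
    have : W ◁ u = (β_ W X).hom ≫ (u ▷ W) ≫ (β_ Y W).hom := by
      rw [← Category.assoc, ← BraidedCategory.braiding_naturality_right]
      simp
    rw [this]
    simp only [MonoidalCategory.comp_whiskerRight, Category.assoc]
  exact (congrArg (Ψ 1 n) (key f)).trans ((MRel.whiskerRight' W hfg Z n (h ≫ ((β_ W X).hom ▷ Z)) (((β_ Y W).hom ▷ Z) ≫ k)).trans (congrArg (Ψ 1 n) (key g)).symm)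

/-- Congruence of observational equivalence for a distributive Markov category `C`
with a distributive Markov functor `Ψ : C_ℕ → FinStoch` (where every object is `0`
or pointed): `∼` is an equivalence relation respected by composition (on both sides)
and by the tensor product. -/
theorem stmt18 (hT : IsTerminal (𝟙_ C))
    (hpt : ∀ X : C, Nonempty (𝟙_ C ⟶ X) ∨ Nonempty (X ≅ ⊥_ C))
    (Ψ : ∀ m n : ℕ, (numeral C m ⟶ numeral C n) → Matrix (Fin m) (Fin n) ℝ)
    (hstoch : ∀ m n (f : numeral C m ⟶ numeral C n), IsStochastic (Ψ m n f))
    (hid : ∀ n, Ψ n n (𝟙 (numeral C n)) = 1)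
    (hcomp : ∀ l m n (f : numeral C l ⟶ numeral C m) (g : numeral C m ⟶ numeral C n),
      Ψ l n (f ≫ g) = Ψ l m f * Ψ m n g) :
    (∀ (X Y : C) (f : X ⟶ Y), MRel Ψ f f) ∧
    (∀ (X Y : C) (f g : X ⟶ Y), MRel Ψ f g → MRel Ψ g f) ∧
    (∀ (X Y : C) (f g h : X ⟶ Y), MRel Ψ f g → MRel Ψ g h → MRel Ψ f h) ∧
    (∀ (W X Y : C) (u : W ⟶ X) (f g : X ⟶ Y), MRel Ψ f g → MRel Ψ (u ≫ f) (u ≫ g)) ∧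
    (∀ (X Y Z : C) (f g : X ⟶ Y) (v : Y ⟶ Z), MRel Ψ f g → MRel Ψ (f ≫ v) (g ≫ v)) ∧
    (∀ (X Y X' Y' : C) (f g : X ⟶ Y) (f' g' : X' ⟶ Y'),
      MRel Ψ f g → MRel Ψ f' g' → MRel Ψ (f ⊗ₘ f') (g ⊗ₘ g')) := by
  refine ⟨fun X Y f Z n h k => rfl,
    fun X Y f g hfg Z n h k => (hfg Z n h k).symm,
    fun X Y f g h hfg hgh Z n hh k => (hfg Z n hh k).trans (hgh Z n hh k),
    fun W X Y u f g hfg Z n h k => ?_,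
    fun X Y Z f g v hfg W n h k => ?_,
    fun X Y X' Y' f g f' g' hfg hfg' => ?_⟩
  · have := hfg Z n (h ≫ (u ▷ Z)) k
    convert this using 2 <;> simp [MonoidalCategory.comp_whiskerRight, Category.assoc] <;> exact (Category.assoc _ _ _).symm
  · have := hfg W n h ((v ▷ W) ≫ k)
    simpa [MonoidalCategory.comp_whiskerRight, Category.assoc] using this
  · have h1 : MRel Ψ (f ▷ X') (g ▷ X') := MRel.whiskerRight' X' hfg
    have h2 : MRel Ψ (Y ◁ f') (Y ◁ g') := MRel.whiskerLeft' Y hfg'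
    have e1 : MRel Ψ ((f ▷ X') ≫ (Y ◁ f')) ((g ▷ X') ≫ (Y ◁ f')) := by
      intro Z n hh k
      have := h1 Z n hh (((Y ◁ f') ▷ Z) ≫ k)
      simpa [MonoidalCategory.comp_whiskerRight, Category.assoc] using this
    have e2 : MRel Ψ ((g ▷ X') ≫ (Y ◁ f')) ((g ▷ X') ≫ (Y ◁ g')) := by
      intro Z n hh k
      have := h2 Z n (hh ≫ ((g ▷ X') ▷ Z)) k
      convert this using 2 <;> simp [MonoidalCategory.comp_whiskerRight, Category.assoc] <;> exact (Category.assoc _ _ _).symm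
    have : MRel Ψ ((f ▷ X') ≫ (Y ◁ f')) ((g ▷ X') ≫ (Y ◁ g')) :=
      fun Z n hh k => (e1 Z n hh k).trans (e2 Z n hh k)
    simpa [MonoidalCategory.tensorHom_def] using this
end

section
/- In any distributive Markov category C restricted to numeral objects, every morphism g : m → n factors through its restrictions to points: g ∘ f = eval ∘ (f ⊗ g₁ ⊗ ⋯ ⊗ g_m) ∘ (identification l ≅ l ⊗ 1^{⊗m}), for any f : l → m, where g_i = g ∘ ι_i : 1 → n are the composites with the coproduct injections ι_i : 1 → m, and eval : m ⊗ n^{⊗m} → n is the evaluation map induced by distributivity (corresponding to the evaluation function m × n^m → n in FinSet). -/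
open CategoryTheory CategoryTheory.Limits MonoidalCategory

variable {C : Type*} [Category C] [MonoidalCategory C] [SymmetricCategory C]
  [HasInitial C] [HasBinaryCoproducts C]

/-- Iterated tensor power `X^{⊗k}`. -/
noncomputable def tensorPow (X : C) : ℕ → C
  | 0 => 𝟙_ C
  | (k + 1) => tensorPow X k ⊗ X

/-- The coproduct injections `ι_i : 1 ⟶ m` into a numeral object. -/
noncomputable def iota (C : Type*) [Category C] [MonoidalCategory C]
    [HasInitial C] [HasBinaryCoproducts C] : ∀ m, Fin m → (𝟙_ C ⟶ numeral C m)
  | 0, i => i.elim0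
  | 1, _ => 𝟙 (𝟙_ C)
  | (m + 2), i =>
      Fin.lastCases coprod.inr (fun j => iota C (m + 1) j ≫ coprod.inl) i

/-- The canonical identification `1^{⊗k} ≅ 1`. -/
noncomputable def unitPow (C : Type*) [Category C] [MonoidalCategory C] :
    ∀ k, (tensorPow (𝟙_ C : C) k ≅ 𝟙_ C)
  | 0 => Iso.refl _
  | (k + 1) => (ρ_ _) ≪≫ unitPow C k

/-- The tensor of a family of points: `g₁ ⊗ ⋯ ⊗ g_k : 1^{⊗k} ⟶ N^{⊗k}`. -/
noncomputable def tensorFan {N : C} : ∀ k, (Fin k → (𝟙_ C ⟶ N)) →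
    (tensorPow (𝟙_ C : C) k ⟶ tensorPow N k)
  | 0, _ => 𝟙 _
  | (k + 1), gs => tensorFan k (fun i => gs i.castSucc) ⊗ₘ gs (Fin.last k)

/-- The projection `N^{⊗k} ⟶ N` onto the `i`-th tensor factor, deleting the other
factors via the terminal maps into the monoidal unit. -/
noncomputable def tproj (hT : IsTerminal (𝟙_ C)) {N : C} :
    ∀ k, Fin k → (tensorPow N k ⟶ N)
  | 0, i => i.elim0
  | (k + 1), i =>
      Fin.lastCases (hT.from (tensorPow N k) ▷ N ≫ (λ_ N).hom)
        (fun j => (tensorPow N k ◁ hT.from N) ≫ (ρ_ _).hom ≫ tproj hT k j) i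

lemma fan_tproj (hT : IsTerminal (𝟙_ C)) {N : C} :
    ∀ (k : ℕ) (gs : Fin k → (𝟙_ C ⟶ N)) (i : Fin k),
    (unitPow C k).inv ≫ tensorFan k gs ≫ tproj hT k i = gs i := by
  intro k
  induction k with
  | zero => exact fun _ i => i.elim0
  | succ k ih =>
    intro gs i
    induction i using Fin.lastCases with
    | last =>
      have h1 : tensorFan k (fun i => gs i.castSucc) ≫ hT.from _ =
          hT.from (tensorPow (𝟙_ C) k) := hT.hom_ext _ _
      have h2 : (unitPow C k).inv ≫ hT.from (tensorPow (𝟙_ C) k) = 𝟙 _ :=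
        hT.hom_ext _ _
      simp only [tensorFan, tproj, unitPow, tensorPow, Fin.lastCases_last, Iso.trans_inv,
        Category.assoc, MonoidalCategory.tensorHom_def, whisker_exchange_assoc]
      rw [← comp_whiskerRight_assoc, h1]
      rw [← rightUnitor_inv_naturality_assoc, reassoc_of% h2, ← unitors_inv_equal]
      simp
    | cast j =>
      have h0 : gs (Fin.last k) ≫ hT.from N = 𝟙 _ := hT.hom_ext _ _
      simp only [tensorFan, tproj, unitPow, tensorPow, Fin.lastCases_castSucc, Iso.trans_inv,
        Category.assoc, MonoidalCategory.tensorHom_def]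
      rw [← MonoidalCategory.whiskerLeft_comp_assoc, h0, MonoidalCategory.whiskerLeft_id,
        Category.id_comp, rightUnitor_naturality_assoc, Iso.inv_hom_id_assoc]
      exact ih _ j

/-- In a distributive Markov category restricted to numeral objects, every morphism
`g : m ⟶ n` factors through its restrictions to points:
`g ∘ f = eval ∘ (f ⊗ g₁ ⊗ ⋯ ⊗ g_m) ∘ (l ≅ l ⊗ 1^{⊗m})`, where `g_i = ι_i ≫ g` and
`eval : m ⊗ n^{⊗m} ⟶ n` is the evaluation map induced by distributivity
(characterized on the injections `ι_i` by projecting the `i`-th factor, the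
injections being jointly epic by distributivity). -/
theorem stmt19 (hT : IsTerminal (𝟙_ C)) (l m n : ℕ)
    (f : numeral C l ⟶ numeral C m) (g : numeral C m ⟶ numeral C n)
    (ev : numeral C m ⊗ tensorPow (numeral C n) m ⟶ numeral C n)
    (hev : ∀ i : Fin m,
      (iota C m i ▷ tensorPow (numeral C n) m) ≫ ev =
        (λ_ (tensorPow (numeral C n) m)).hom ≫ tproj hT m i)
    (hjoint : ∀ (W : C) (u v : numeral C m ⟶ W),
      (∀ i : Fin m, iota C m i ≫ u = iota C m i ≫ v) → u = v) :
    f ≫ g =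
      (ρ_ (numeral C l)).inv ≫ (numeral C l ◁ (unitPow C m).inv) ≫
        (f ⊗ₘ tensorFan m fun i => iota C m i ≫ g) ≫ ev := by
  have key : g = (ρ_ (numeral C m)).inv ≫
      (numeral C m ◁ ((unitPow C m).inv ≫ tensorFan m fun i => iota C m i ≫ g)) ≫ ev := by
    apply hjoint
    intro i
    rw [rightUnitor_inv_naturality_assoc, ← whisker_exchange_assoc, hev i,
      leftUnitor_naturality_assoc, ← unitors_inv_equal, Iso.inv_hom_id_assoc]
    simp [fan_tproj hT m (fun i => iota C m i ≫ g) i]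
  calc f ≫ g = f ≫ (ρ_ (numeral C m)).inv ≫
      (numeral C m ◁ ((unitPow C m).inv ≫ tensorFan m fun i => iota C m i ≫ g)) ≫ ev := by
        rw [← key]
    _ = _ := by
        rw [rightUnitor_inv_naturality_assoc, MonoidalCategory.tensorHom_def]
        simp [whisker_exchange_assoc]
end
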